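/- arXiv:1904.01499 — 10 statements merged into one kernel-verified Lean document; each statement's English description precedes it below -/
import Mathlib

section
/- Let n, m, l be natural numbers and let A ∈ ℂ^{n×n}, B ∈ ℂ^{n×m}, C ∈ ℂ^{l×n}. Then the (n+l)×(n+m) block matrix [[A, B],[C, 0]] has rank < n if and only if for every E ∈ ℂ^{m×n} and every K ∈ ℂ^{n×l}, rank(A + B·E + K·C) < n. -/
/-!
Adding `B E + K C` to the top-left block is a block row and column operation, so the block
matrix has the same rank for all `E, K`, and that rank bounds the rank of `A + B E + K C`.

Conversely, pick `E, K` for which `A' = A + B E + K C` has maximal rank `r < n`. A rank-one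
perturbation `u ψᵀ` with `u ∉ range A'` and `ψ` not vanishing on `ker A'` raises the rank strictly;
realising such perturbations as `B E` or `K C` shows `range B ⊆ range A'`, `ker A' ⊆ ker C`, and
`C x = 0` whenever `A' x ∈ range B`. Together these put the range of `[[A', B], [C, 0]]` inside
the range of `[A'; C]`, whose rank is `r`.
-/

open Matrix

theorem eq_zero_of_smul_mem_of_notMem {F M : Type*} [Field F] [AddCommGroup M] [Module F M]
    {p : Submodule F M} {u : M} (hu : u ∉ p) {c : F} (h : c • u ∈ p) : c = 0 := by
  by_contra hc
  exact hu ((Submodule.smul_mem_iff p hc).1 h)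

namespace Matrix

variable {F : Type*} [Field F] {l m n p : Type*} [Fintype n]

theorem rank_le_rank_of_ker_le {A : Matrix p n F} {A' : Matrix l n F}
    (h : LinearMap.ker A.mulVecLin ≤ LinearMap.ker A'.mulVecLin) : A'.rank ≤ A.rank := by
  have hA := A.mulVecLin.finrank_range_add_finrank_ker
  have hA' := A'.mulVecLin.finrank_range_add_finrank_ker
  have := Submodule.finrank_mono h
  rw [rank, rank]
  omega

theorem rank_lt_rank_of_ker_lt {A : Matrix p n F} {A' : Matrix l n F}
    (h : LinearMap.ker A.mulVecLin < LinearMap.ker A'.mulVecLin) : A'.rank < A.rank := by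
  have hA := A.mulVecLin.finrank_range_add_finrank_ker
  have hA' := A'.mulVecLin.finrank_range_add_finrank_ker
  have := Submodule.finrank_lt_finrank_of_lt h
  rw [rank, rank]
  omega

theorem exists_mulVec_eq_zero_of_rank_lt {A : Matrix p n F} (h : A.rank < Fintype.card n) :
    ∃ v ≠ 0, A *ᵥ v = 0 := by
  by_contra! hA
  have hinj : Function.Injective A.mulVecLin :=
    (injective_iff_map_eq_zero _).2 fun v hv => by_contra fun hv0 => hA v hv0 hv
  rw [rank, LinearMap.finrank_range_of_inj hinj, Module.finrank_fintype_fun_eq_card] at h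
  exact h.false

theorem exists_notMem_range_of_rank_lt [Fintype p] {A : Matrix p n F}
    (h : A.rank < Fintype.card p) : ∃ u, u ∉ LinearMap.range A.mulVecLin := by
  by_contra! hA
  rw [rank, Submodule.eq_top_iff'.2 hA, finrank_top, Module.finrank_fintype_fun_eq_card] at h
  exact h.false

theorem exists_dotProduct_ne_zero {v : n → F} (hv : v ≠ 0) : ∃ ψ : n → F, ψ ⬝ᵥ v ≠ 0 := by
  by_contra! h
  exact hv (dotProduct_eq_zero v fun w => by rw [dotProduct_comm, h])

theorem add_vecMulVec_mulVec (A : Matrix p n F) (u : p → F) (ψ x : n → F) :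
    (A + vecMulVec u ψ) *ᵥ x = A *ᵥ x + (ψ ⬝ᵥ x) • u := by
  rw [add_mulVec, vecMulVec_mulVec, op_smul_eq_smul]

section RankOnePerturbation

variable {A : Matrix p n F} {u : p → F} {ψ : n → F}

theorem ker_add_vecMulVec_le (hu : u ∉ LinearMap.range A.mulVecLin) :
    LinearMap.ker (A + vecMulVec u ψ).mulVecLin ≤ LinearMap.ker A.mulVecLin := by
  intro x hx
  simp only [LinearMap.mem_ker, mulVecLin_apply, add_vecMulVec_mulVec] at hx ⊢
  have hψx : ψ ⬝ᵥ x = 0 :=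
    eq_zero_of_smul_mem_of_notMem hu ⟨-x, by simp [mulVec_neg, eq_neg_of_add_eq_zero_right hx]⟩
  simpa [hψx] using hx

theorem rank_le_rank_add_vecMulVec (hu : u ∉ LinearMap.range A.mulVecLin) :
    A.rank ≤ (A + vecMulVec u ψ).rank :=
  rank_le_rank_of_ker_le (ker_add_vecMulVec_le hu)

theorem rank_lt_rank_add_vecMulVec (hu : u ∉ LinearMap.range A.mulVecLin) {v : n → F}
    (hv : A *ᵥ v = 0) (hψ : ψ ⬝ᵥ v ≠ 0) : A.rank < (A + vecMulVec u ψ).rank := by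
  refine rank_lt_rank_of_ker_lt (lt_of_le_of_ne (ker_add_vecMulVec_le hu) fun h => hψ ?_)
  have hv' : v ∈ LinearMap.ker (A + vecMulVec u ψ).mulVecLin := h ▸ hv
  simp only [LinearMap.mem_ker, mulVecLin_apply, add_vecMulVec_mulVec, hv, zero_add] at hv'
  exact eq_zero_of_smul_mem_of_notMem hu (hv' ▸ zero_mem _)

end RankOnePerturbation

theorem rank_le_rank_fromBlocks [Fintype l] (A : Matrix p n F) (B : Matrix p l F)
    (C : Matrix m n F) (D : Matrix m l F) : A.rank ≤ (fromBlocks A B C D).rank :=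
  rank_submatrix_le (fromBlocks A B C D) Sum.inl Sum.inl

theorem rank_fromBlocks_add_mul_add_mul {R : Type*} [CommRing R] [Fintype m] [Fintype l]
    [Fintype p] [DecidableEq n] [DecidableEq m] [DecidableEq l] [DecidableEq p]
    (A : Matrix p n R) (B : Matrix p m R) (C : Matrix l n R) (E : Matrix m n R)
    (K : Matrix p l R) :
    (fromBlocks (A + B * E + K * C) B C 0).rank = (fromBlocks A B C 0).rank := by
  have h : fromBlocks (A + B * E + K * C) B C 0 =
      fromBlocks (1 : Matrix p p R) K 0 (1 : Matrix l l R) * fromBlocks A B C 0 *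
        fromBlocks (1 : Matrix n n R) 0 E (1 : Matrix m m R) := by
    simp only [fromBlocks_multiply, Matrix.one_mul, Matrix.mul_one, Matrix.zero_mul,
      Matrix.mul_zero, add_zero, zero_add]
    abel_nf
  rw [h, rank_mul_eq_left_of_isUnit_det _ _ (by simp),
    rank_mul_eq_right_of_isUnit_det _ _ (by simp)]

theorem rank_fromBlocks_zero₂₂_le [Fintype m] {A : Matrix p n F} {B : Matrix p m F}
    {C : Matrix l n F} (hB : LinearMap.range B.mulVecLin ≤ LinearMap.range A.mulVecLin)
    (hC : LinearMap.ker A.mulVecLin ≤ LinearMap.ker C.mulVecLin)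
    (hBC : ∀ x, A *ᵥ x ∈ LinearMap.range B.mulVecLin → C *ᵥ x = 0) :
    (fromBlocks A B C 0).rank ≤ A.rank := by
  calc (fromBlocks A B C 0).rank ≤ (fromRows A C).rank := Submodule.finrank_mono ?_
    _ ≤ A.rank := rank_le_rank_of_ker_le fun x hx => ?_
  · rintro _ ⟨z, rfl⟩
    obtain ⟨x, hx⟩ := hB ⟨z ∘ Sum.inr, rfl⟩
    simp only [mulVecLin_apply] at hx
    refine ⟨z ∘ Sum.inl + x, ?_⟩
    ext (i | i) <;> simp [fromBlocks_mulVec, mulVec_add, hx, hBC x ⟨_, hx.symm⟩]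
  · have hAx : A *ᵥ x = 0 := hx
    have hCx : C *ᵥ x = 0 := hC hx
    simp [hAx, hCx]

section MaximalRank

variable [Fintype m] [Fintype l] {A : Matrix p n F} {B : Matrix p m F} {C : Matrix l n F}

theorem range_le_of_forall_rank_le
    (hmax : ∀ (E : Matrix m n F) (K : Matrix p l F), (A + B * E + K * C).rank ≤ A.rank)
    (hn : A.rank < Fintype.card n) :
    LinearMap.range B.mulVecLin ≤ LinearMap.range A.mulVecLin := by
  rintro _ ⟨y, rfl⟩
  by_contra hy
  obtain ⟨v, hv0, hv⟩ := exists_mulVec_eq_zero_of_rank_lt hn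
  obtain ⟨ψ, hψ⟩ := exists_dotProduct_ne_zero hv0
  have h := hmax (vecMulVec y ψ) 0
  rw [mul_vecMulVec, Matrix.zero_mul, add_zero] at h
  exact (rank_lt_rank_add_vecMulVec hy hv hψ).not_ge h

theorem ker_le_of_forall_rank_le [Fintype p]
    (hmax : ∀ (E : Matrix m n F) (K : Matrix p l F), (A + B * E + K * C).rank ≤ A.rank)
    (hp : A.rank < Fintype.card p) :
    LinearMap.ker A.mulVecLin ≤ LinearMap.ker C.mulVecLin := by
  intro v hv
  by_contra hCv
  simp only [LinearMap.mem_ker, mulVecLin_apply] at hv hCv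
  obtain ⟨u, hu⟩ := exists_notMem_range_of_rank_lt hp
  obtain ⟨φ, hφ⟩ := exists_dotProduct_ne_zero hCv
  have h := hmax 0 (vecMulVec u φ)
  rw [Matrix.mul_zero, add_zero, vecMulVec_mul] at h
  rw [dotProduct_mulVec] at hφ
  exact (rank_lt_rank_add_vecMulVec hu hv hφ).not_ge h

theorem mulVec_eq_zero_of_forall_rank_le [Fintype p]
    (hmax : ∀ (E : Matrix m n F) (K : Matrix p l F), (A + B * E + K * C).rank ≤ A.rank)
    (hn : A.rank < Fintype.card n) (hp : A.rank < Fintype.card p) {x : n → F}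
    (hx : A *ᵥ x ∈ LinearMap.range B.mulVecLin) : C *ᵥ x = 0 := by
  by_contra hCx
  obtain ⟨u, hu⟩ := exists_notMem_range_of_rank_lt hp
  obtain ⟨φ, hφ⟩ := exists_dotProduct_ne_zero hCx
  set ψ := φ ᵥ* C
  have hψx : ψ ⬝ᵥ x ≠ 0 := by rwa [dotProduct_mulVec] at hφ
  -- `A + u ψᵀ` has the same rank as `A`, so it is again rank-maximal; yet `A x` is not in its range.
  have hrank : (A + vecMulVec u ψ).rank = A.rank := by
    refine le_antisymm ?_ (rank_le_rank_add_vecMulVec hu)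
    simpa [vecMulVec_mul] using hmax 0 (vecMulVec u φ)
  have hmax' (E : Matrix m n F) (K : Matrix p l F) :
      (A + vecMulVec u ψ + B * E + K * C).rank ≤ (A + vecMulVec u ψ).rank := by
    rw [hrank, ← vecMulVec_mul]
    convert hmax E (K + vecMulVec u φ) using 2
    rw [Matrix.add_mul]
    abel
  obtain ⟨x', hx'⟩ := range_le_of_forall_rank_le hmax' (hrank ▸ hn) hx
  simp only [mulVecLin_apply, add_vecMulVec_mulVec] at hx'
  have hψx' : ψ ⬝ᵥ x' = 0 :=
    eq_zero_of_smul_mem_of_notMem hu ⟨x - x', by rw [mulVecLin_apply, mulVec_sub, ← hx']; abel⟩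
  have hker : A *ᵥ (x' - x) = 0 := by rw [mulVec_sub, ← hx', hψx', zero_smul, add_zero, sub_self]
  have hC : C *ᵥ (x' - x) = 0 := ker_le_of_forall_rank_le hmax hp hker
  rw [mulVec_sub, sub_eq_zero] at hC
  exact hψx (by rw [← dotProduct_mulVec, ← hC, dotProduct_mulVec, hψx'])

theorem rank_fromBlocks_zero₂₂_le_of_forall_rank_le [Fintype p]
    (hmax : ∀ (E : Matrix m n F) (K : Matrix p l F), (A + B * E + K * C).rank ≤ A.rank)
    (hn : A.rank < Fintype.card n) (hp : A.rank < Fintype.card p) :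
    (fromBlocks A B C 0).rank ≤ A.rank :=
  rank_fromBlocks_zero₂₂_le (range_le_of_forall_rank_le hmax hn) (ker_le_of_forall_rank_le hmax hp)
    fun _ => mulVec_eq_zero_of_forall_rank_le hmax hn hp

end MaximalRank

end Matrix

/-- rank of the block matrix [[A,B],[C,0]] is < n iff
rank (A + B·E + K·C) < n for all E, K. -/
theorem block_rank_lt_iff_forall (n m l : ℕ)
    (A : Matrix (Fin n) (Fin n) ℂ) (B : Matrix (Fin n) (Fin m) ℂ)
    (C : Matrix (Fin l) (Fin n) ℂ) :
    (Matrix.fromBlocks A B C 0).rank < n ↔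
      ∀ (E : Matrix (Fin m) (Fin n) ℂ) (K : Matrix (Fin n) (Fin l) ℂ),
        (A + B * E + K * C).rank < n := by
  refine ⟨fun h E K => ?_, fun H => ?_⟩
  · calc (A + B * E + K * C).rank
        ≤ (fromBlocks (A + B * E + K * C) B C 0).rank := rank_le_rank_fromBlocks _ _ _ _
      _ = (fromBlocks A B C 0).rank := rank_fromBlocks_add_mul_add_mul A B C E K
      _ < n := h
  · let rk (EK : Matrix (Fin m) (Fin n) ℂ × Matrix (Fin n) (Fin l) ℂ) :=
      (A + B * EK.1 + EK.2 * C).rank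
    obtain ⟨_, ⟨⟨E₀, K₀⟩, rfl⟩, hE₀K₀⟩ := BddAbove.exists_isGreatest_of_nonempty
      ⟨n, by rintro _ ⟨EK, rfl⟩; exact (H EK.1 EK.2).le⟩ (Set.range_nonempty rk)
    have hmax (E : Matrix (Fin m) (Fin n) ℂ) (K : Matrix (Fin n) (Fin l) ℂ) :
        (A + B * E₀ + K₀ * C + B * E + K * C).rank ≤ (A + B * E₀ + K₀ * C).rank := by
      calc _ = rk (E₀ + E, K₀ + K) := by
            simp only [rk, Matrix.mul_add, Matrix.add_mul]
            abel_nf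
        _ ≤ rk (E₀, K₀) := hE₀K₀ ⟨_, rfl⟩
    have hlt : (A + B * E₀ + K₀ * C).rank < Fintype.card (Fin n) := by simpa using H E₀ K₀
    rw [← rank_fromBlocks_add_mul_add_mul A B C E₀ K₀]
    exact (rank_fromBlocks_zero₂₂_le_of_forall_rank_le hmax hlt hlt).trans_lt (H E₀ K₀)
end

section
/- Let n, m, l be natural numbers and let A ∈ ℂ^{n×n}, B ∈ ℂ^{n×m}, C ∈ ℂ^{l×n}. If the (n+l)×(n+m) block matrix [[A, B],[C, 0]] has rank ≥ n, then there exists a matrix E ∈ ℂ^{m×n} such that the (n+l)×n vertically stacked matrix [A + B·E; C] has rank n. -/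
/-!
View `M = [[A, B], [C, 0]]` as a map on `ℂⁿ × ℂᵐ`. Its kernel has dimension at most `m`, and so
has the kernel `0 × ℂᵐ` of the first projection; hence some `n`-dimensional subspace `S` meets
both only in `0`. Meeting `0 × ℂᵐ` trivially, `S` is the graph of a linear map `E : ℂⁿ → ℂᵐ`;
meeting `ker M` trivially, `x ↦ M (x, E x) = [A + B E; C] x` is injective.
-/

open Module LinearMap

namespace Submodule

theorem exists_notMem_of_ne_top_of_ne_top {R M : Type*} [Ring R] [AddCommGroup M] [Module R M]
    {P Q : Submodule R M} (hP : P ≠ ⊤) (hQ : Q ≠ ⊤) : ∃ v, v ∉ P ∧ v ∉ Q := by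
  have : ¬ ((⊤ : Submodule R M) : Set M) ⊆ P ∪ Q := by
    rw [AddSubgroupClass.subset_union]
    simp [top_le_iff, hP, hQ]
  simpa [Set.subset_def] using this

variable {K V : Type*} [Field K] [AddCommGroup V] [Module K V]

theorem sup_ne_top_of_finrank_add_lt [FiniteDimensional K V] {P Q : Submodule K V}
    (h : finrank K P + finrank K Q < finrank K V) : P ⊔ Q ≠ ⊤ := by
  intro hPQ
  have := finrank_add_le_finrank_add_finrank P Q
  rw [hPQ, finrank_top] at this
  omega

theorem disjoint_sup_span_singleton {S U : Submodule K V} {v : V} (hSU : Disjoint S U)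
    (hv : v ∉ S ⊔ U) : Disjoint (S ⊔ K ∙ v) U := by
  have hv0 : v ≠ 0 := fun h => hv (h ▸ zero_mem _)
  rw [sup_comm] at hv
  exact (hSU.symm.disjoint_sup_right_of_disjoint_sup_left
    ((disjoint_span_singleton' hv0).2 hv)).symm

theorem exists_finrank_eq_disjoint_disjoint [FiniteDimensional K V] (U N : Submodule K V) :
    ∀ k, finrank K U + k ≤ finrank K V → finrank K N + k ≤ finrank K V →
      ∃ S : Submodule K V, finrank K S = k ∧ Disjoint S U ∧ Disjoint S N
  | 0, _, _ => ⟨⊥, finrank_bot K V, disjoint_bot_left, disjoint_bot_left⟩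
  | k + 1, hU, hN => by
    obtain ⟨S, hS, hSU, hSN⟩ := exists_finrank_eq_disjoint_disjoint U N k (by omega) (by omega)
    obtain ⟨v, hvU, hvN⟩ := exists_notMem_of_ne_top_of_ne_top
      (sup_ne_top_of_finrank_add_lt (P := S) (Q := U) (by omega))
      (sup_ne_top_of_finrank_add_lt (P := S) (Q := N) (by omega))
    refine ⟨S ⊔ K ∙ v, ?_, disjoint_sup_span_singleton hSU hvU,
      disjoint_sup_span_singleton hSN hvN⟩
    rw [finrank_sup_span_singleton fun h => hvU (mem_sup_left h), hS]

end Submodule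

namespace LinearMap

variable {K V W X : Type*} [Field K] [AddCommGroup V] [Module K V] [AddCommGroup W] [Module K W]
  [AddCommGroup X] [Module K X] [FiniteDimensional K V] [FiniteDimensional K W]

theorem exists_injective_comp_prod (f : V × W →ₗ[K] X) (hf : finrank K V ≤ finrank K (range f)) :
    ∃ g : V →ₗ[K] W, Function.Injective (f ∘ₗ (LinearMap.id.prod g)) := by
  have hprod : finrank K (V × W) = finrank K V + finrank K W := finrank_prod
  have hrank := finrank_range_add_finrank_ker f
  have hfst := finrank_range_add_finrank_ker (fst K V W)
  rw [Submodule.range_fst, finrank_top] at hfst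
  obtain ⟨S, hS, hS_fst, hS_f⟩ := Submodule.exists_finrank_eq_disjoint_disjoint
    (ker (fst K V W)) (ker f) (finrank K V) (by omega) (by omega)
  let e : S ≃ₗ[K] V := linearEquivOfInjective ((fst K V W).domRestrict S)
    (injective_domRestrict_iff.2 hS_fst) hS
  refine ⟨snd K V W ∘ₗ S.subtype ∘ₗ e.symm, ?_⟩
  have hsection : LinearMap.id.prod (snd K V W ∘ₗ S.subtype ∘ₗ e.symm) = S.subtype ∘ₗ e.symm := by
    ext x
    · exact (e.apply_symm_apply x).symm
    · rfl
  rw [hsection]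
  exact (injective_domRestrict_iff.2 hS_f).comp e.symm.injective

end LinearMap

namespace Matrix

theorem fromRows_add_mul_mulVec {R m n l o : Type*} [Semiring R] [Fintype n] [Fintype o]
    (A : Matrix m n R) (B : Matrix m o R) (C : Matrix l n R) (E : Matrix o n R) (x : n → R) :
    fromRows (A + B * E) C *ᵥ x = fromBlocks A B C 0 *ᵥ Sum.elim x (E *ᵥ x) := by
  rw [fromRows_mulVec, fromBlocks_mulVec, Sum.elim_comp_inl, Sum.elim_comp_inr, add_mulVec,
    mulVec_mulVec, zero_mulVec, add_zero]

end Matrix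

/-- if the block matrix [[A,B],[C,0]] has rank ≥ n, then there is E
with the stacked matrix [A + B·E; C] of rank n. -/
theorem exists_E_of_block_rank_ge (n m l : ℕ)
    (A : Matrix (Fin n) (Fin n) ℂ) (B : Matrix (Fin n) (Fin m) ℂ)
    (C : Matrix (Fin l) (Fin n) ℂ)
    (h : n ≤ (Matrix.fromBlocks A B C 0).rank) :
    ∃ E : Matrix (Fin m) (Fin n) ℂ,
      (Matrix.fromRows (A + B * E) C).rank = n := by
  let f := (Matrix.fromBlocks A B C 0).mulVecLin ∘ₗ
    (LinearEquiv.sumArrowLequivProdArrow (Fin n) (Fin m) ℂ ℂ).symm.toLinearMap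
  have hf : finrank ℂ (Fin n → ℂ) ≤ finrank ℂ (range f) := by
    rwa [range_comp_of_range_eq_top _ (LinearEquiv.range _), finrank_fin_fun]
  obtain ⟨g, hg⟩ := exists_injective_comp_prod f hf
  refine ⟨toMatrix' g, ?_⟩
  have hstack : (Matrix.fromRows (A + B * toMatrix' g) C).mulVecLin = f ∘ₗ LinearMap.id.prod g := by
    refine LinearMap.ext fun x => ?_
    rw [Matrix.mulVecLin_apply, Matrix.fromRows_add_mul_mulVec, toMatrix'_mulVec]
    rfl
  rw [Matrix.rank, hstack, finrank_range_of_inj hg, finrank_fin_fun]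
end

section
/- Let n, l be natural numbers and let A ∈ ℂ^{n×n} and C ∈ ℂ^{l×n}. If the (n+l)×n vertically stacked matrix [A; C] has rank n, then there exists a matrix K ∈ ℂ^{n×l} such that rank(A + K·C) = n, i.e., A + K·C is invertible. -/
/-- if the stacked matrix [A; C] has rank n, then there is K with
rank (A + K·C) = n. -/
theorem exists_K_of_stacked_rank (n l : ℕ)
    (A : Matrix (Fin n) (Fin n) ℂ) (C : Matrix (Fin l) (Fin n) ℂ)
    (h : (Matrix.fromRows A C).rank = n) :
    ∃ K : Matrix (Fin n) (Fin l) ℂ, (A + K * C).rank = n := by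
  classical
  set f := A.mulVecLin with hf
  set g := C.mulVecLin with hg
  -- the stacked map is injective
  have hstack : LinearMap.ker (Matrix.fromRows A C).mulVecLin = ⊥ := by
    have h1 := LinearMap.finrank_range_add_finrank_ker (Matrix.fromRows A C).mulVecLin
    rw [Matrix.rank] at h
    rw [h, Module.finrank_pi, Fintype.card_fin] at h1
    have : Module.finrank ℂ (LinearMap.ker (Matrix.fromRows A C).mulVecLin) = 0 := by omega
    exact Submodule.finrank_eq_zero.mp this
  have hinter : LinearMap.ker f ⊓ LinearMap.ker g = ⊥ := by
    rw [Submodule.eq_bot_iff]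
    intro x hx
    obtain ⟨hx1, hx2⟩ := Submodule.mem_inf.mp hx
    have : (Matrix.fromRows A C).mulVecLin x = 0 := by
      rw [Matrix.mulVecLin_apply, Matrix.fromRows_mulVec]
      have e1 : A.mulVec x = 0 := hx1
      have e2 : C.mulVec x = 0 := hx2
      rw [e1, e2]
      ext i; cases i <;> rfl
    have := hstack ▸ (LinearMap.mem_ker.mpr this)
    simpa using this
  set N := LinearMap.ker f with hN
  set W := LinearMap.range f with hW
  obtain ⟨U, hU⟩ := Submodule.exists_isCompl W
  obtain ⟨Q, hQ⟩ := Submodule.exists_isCompl (N.map g)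
  -- g restricted to N is injective
  have hdk : LinearMap.ker (g.domRestrict N) = ⊥ := by
    rw [Submodule.eq_bot_iff]
    intro x hx
    have hx' : g (x : Fin n → ℂ) = 0 := hx
    have : (x : Fin n → ℂ) ∈ LinearMap.ker f ⊓ LinearMap.ker g :=
      Submodule.mem_inf.mpr ⟨x.2, hx'⟩
    rw [hinter] at this
    exact Subtype.ext (by simpa using this)
  -- finrank computations
  have hrk1 := LinearMap.finrank_range_add_finrank_ker (g.domRestrict N)
  rw [hdk, finrank_bot ℂ _, add_zero, LinearMap.range_domRestrict] at hrk1
  have hrk2 := LinearMap.finrank_range_add_finrank_ker f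
  rw [Module.finrank_pi, Fintype.card_fin, ← hN, ← hW] at hrk2
  have hrk3 := Submodule.finrank_add_eq_of_isCompl hU
  rw [Module.finrank_pi, Fintype.card_fin] at hrk3
  have hfr : Module.finrank ℂ (N.map g) = Module.finrank ℂ U := by omega
  obtain ⟨e⟩ := FiniteDimensional.nonempty_linearEquiv_of_finrank_eq hfr
  -- the correction map
  set k : (Fin l → ℂ) →ₗ[ℂ] (Fin n → ℂ) :=
    U.subtype ∘ₗ (e : (N.map g) →ₗ[ℂ] U) ∘ₗ (Submodule.linearProjOfIsCompl (N.map g) Q hQ)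
    with hk
  have hkU : ∀ y, k y ∈ U := fun y => ((e (Submodule.linearProjOfIsCompl (N.map g) Q hQ y)) : U).2
  have hinj : LinearMap.ker (f + k ∘ₗ g) = ⊥ := by
    rw [Submodule.eq_bot_iff]
    intro x hx
    have hx' : f x + k (g x) = 0 := hx
    have hfx : f x = -(k (g x)) := by
      rw [eq_neg_iff_add_eq_zero]; exact hx'
    have hmem : f x ∈ W ⊓ U := by
      refine Submodule.mem_inf.mpr ⟨LinearMap.mem_range_self f x, ?_⟩
      rw [hfx]
      exact neg_mem (hkU (g x))
    rw [hU.inf_eq_bot] at hmem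
    have hfx0 : f x = 0 := by simpa using hmem
    have hkgx0 : k (g x) = 0 := by
      have := hfx0 ▸ hfx
      simpa using this.symm
    have hxN : x ∈ N := hfx0
    have hgxmem : g x ∈ N.map g := Submodule.mem_map_of_mem hxN
    have hproj : Submodule.linearProjOfIsCompl (N.map g) Q hQ (g x) = ⟨g x, hgxmem⟩ :=
      Submodule.linearProjOfIsCompl_apply_left hQ ⟨g x, hgxmem⟩
    have hval : (U.subtype) (e (Submodule.linearProjOfIsCompl (N.map g) Q hQ (g x))) = 0 := hkgx0
    rw [hproj] at hval
    have : e ⟨g x, hgxmem⟩ = 0 := Subtype.ext hval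
    have hgx0 : g x = 0 := by
      have h0 : (⟨g x, hgxmem⟩ : N.map g) = 0 := e.map_eq_zero_iff.mp this
      exact congrArg Subtype.val h0
    have : x ∈ LinearMap.ker f ⊓ LinearMap.ker g :=
      Submodule.mem_inf.mpr ⟨hxN, hgx0⟩
    rw [hinter] at this
    simpa using this
  refine ⟨LinearMap.toMatrix' k, ?_⟩
  have hml : (A + LinearMap.toMatrix' k * C).mulVecLin = f + k ∘ₗ g := by
    rw [Matrix.mulVecLin_add, Matrix.mulVecLin_mul]
    congr 1
    rw [← Matrix.toLin'_apply', Matrix.toLin'_toMatrix']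
  have hrn := LinearMap.finrank_range_add_finrank_ker (A + LinearMap.toMatrix' k * C).mulVecLin
  rw [hml, hinj, finrank_bot ℂ _, add_zero, Module.finrank_pi, Fintype.card_fin,
    ← hml] at hrn
  exact hrn
end

section
/- Let d, n₁, n₂ be natural numbers, let w₁, …, w_d ∈ ℂ^{n₁} be column vectors, and let r₁, …, r_d ∈ ℂ^{1×n₂} be row vectors. Then the maximum, over all parameter vectors p = (p₁, …, p_d) ∈ ℂ^d, of rank(∑_{i=1}^d p_i · w_i · r_i) equals the maximum cardinality of a subset I ⊆ {1, …, d} such that the family (w_i)_{i ∈ I} is linearly independent and the family (r_i)_{i ∈ I} is linearly independent. -/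
/-!
If `I` is jointly independent, the parameter vector `p = 1_I` gives `∑_{i ∈ I} wᵢ rᵢ = W R` with
`W` injective and `R` surjective, a matrix of rank `|I|`.

Conversely, `M = ∑ pᵢ wᵢ rᵢ` of rank `ρ` has an invertible `ρ × ρ` submatrix
`A = ∑_{i ∈ s} vᵢ zᵢ`, again a sum of rank-one terms. While `|s| > ρ` one term can be dropped
keeping `A` invertible: otherwise the matrix determinant lemma gives `zₖ A⁻¹ vₖ = 1` for every
`k ∈ s`, and summing over `k` gives `|s| = tr (A⁻¹ A) = ρ`. When `|s| = ρ`, the rows of `A` lie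
in the span of the `zᵢ` and its columns in the span of the `vᵢ`, so both families are bases of
`ℂ^ρ`; the families `rᵢ` and `pᵢ wᵢ` they are restrictions of are then independent as well.
-/

open Matrix Module Submodule

theorem LinearIndependent.of_smul {R ι V : Type*} [DivisionRing R] [AddCommGroup V]
    [Module R V] {v : ι → V} {c : ι → R} (h : LinearIndependent R fun i => c i • v i) :
    LinearIndependent R v := by
  have hc : ∀ i, c i ≠ 0 := fun i hi => h.ne_zero i (by simp [hi])
  exact (LinearIndependent.units_smul_iff v fun i => Units.mk0 (c i) (hc i)).mp h

namespace Matrix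

section CommRing

variable {R l m n ι : Type*} [CommRing R]

theorem rank_mul_eq_right_of_mulVec_injective [Fintype m] [Fintype n] {A : Matrix l m R}
    (hA : Function.Injective A.mulVec) (B : Matrix m n R) : (A * B).rank = B.rank := by
  rw [rank, rank, mulVecLin_mul, LinearMap.range_comp]
  exact (equivMapOfInjective _ hA _).finrank_eq.symm

theorem sum_vecMulVec_eq_transpose_mul [Fintype ι] (v : ι → m → R) (z : ι → n → R) :
    ∑ i, vecMulVec (v i) (z i) = (of v)ᵀ * of z := by
  ext a b
  simp [sum_apply, vecMulVec_apply, mul_apply]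

theorem det_sub_vecMulVec [Fintype m] [DecidableEq m] {A : Matrix m m R} (hA : IsUnit A.det)
    (u x : m → R) : (A - vecMulVec u x).det = A.det * (1 - (A⁻¹ *ᵥ u) ⬝ᵥ x) := by
  rw [sub_eq_add_neg, ← neg_vecMulVec, vecMulVec_eq Unit,
    det_add_replicateCol_mul_replicateRow hA]
  congr 1
  rw [det_unique, Matrix.mul_assoc, ← replicateCol_mulVec, add_apply,
    replicateRow_mul_replicateCol_apply, mulVec_neg, dotProduct_neg, dotProduct_comm,
    one_apply_eq, ← sub_eq_add_neg]

end CommRing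

variable {K ι m n : Type*} [Field K]

theorem rank_sum_vecMulVec_of_linearIndependent [Fintype ι] [Fintype m] [Fintype n]
    {v : ι → m → K} {z : ι → n → K} (hv : LinearIndependent K v) (hz : LinearIndependent K z) :
    (∑ i, vecMulVec (v i) (z i)).rank = Fintype.card ι := by
  rw [sum_vecMulVec_eq_transpose_mul,
    rank_mul_eq_right_of_mulVec_injective (A := (of v)ᵀ) (mulVec_injective_iff.mpr hv)]
  exact hz.rank_matrix

theorem exists_linearIndependent_col_comp_of_rank_eq [Fintype n] (A : Matrix m n K) {t : ℕ}
    (ht : A.rank = t) : ∃ g : Fin t → n, LinearIndependent K (A.col ∘ g) := by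
  obtain ⟨b, hbA, hspan, hb⟩ := exists_linearIndependent K (Set.range A.col)
  have : Fintype b := ((Set.finite_range A.col).subset hbA).fintype
  have hcard : Fintype.card b = t := by
    rw [← ht, rank_eq_finrank_span_cols, ← hspan, finrank_span_set_eq_card hb,
      Set.toFinset_card]
  choose g hg using fun a : Fin t => hbA ((Fintype.equivFinOfCardEq hcard).symm a).2
  refine ⟨g, ?_⟩
  rw [show A.col ∘ g = _ from funext hg]
  exact hb.comp _ (Fintype.equivFinOfCardEq hcard).symm.injective

theorem exists_isUnit_submatrix [Fintype m] [Fintype n] (A : Matrix m n K) :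
    ∃ (f : Fin A.rank → m) (g : Fin A.rank → n), IsUnit (A.submatrix f g) := by
  obtain ⟨g, hg⟩ := A.exists_linearIndependent_col_comp_of_rank_eq rfl
  have hrank : (A.submatrix id g)ᵀ.rank = A.rank := by
    simpa using hg.rank_matrix (M := (A.submatrix id g)ᵀ)
  obtain ⟨f, hf⟩ := (A.submatrix id g)ᵀ.exists_linearIndependent_col_comp_of_rank_eq hrank
  exact ⟨f, g, linearIndependent_rows_iff_isUnit.mp hf⟩

section InvertibleSum

variable [Fintype m] [DecidableEq m] {v z : ι → m → K} {s : Finset ι}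

theorem exists_isUnit_sum_erase_vecMulVec [CharZero K] [DecidableEq ι]
    (hA : IsUnit (∑ i ∈ s, vecMulVec (v i) (z i))) (hs : Fintype.card m < s.card) :
    ∃ k ∈ s, IsUnit (∑ i ∈ s.erase k, vecMulVec (v i) (z i)) := by
  set A := ∑ i ∈ s, vecMulVec (v i) (z i)
  have hdet : IsUnit A.det := (isUnit_iff_isUnit_det A).mp hA
  by_contra! hcon
  have hone : ∀ k ∈ s, (A⁻¹ *ᵥ v k) ⬝ᵥ z k = 1 := by
    intro k hk
    have hsing : (A - vecMulVec (v k) (z k)).det = 0 := by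
      by_contra h
      rw [← Finset.sum_erase_eq_sub hk] at h
      exact hcon k hk ((isUnit_iff_isUnit_det _).mpr (isUnit_iff_ne_zero.mpr h))
    rw [det_sub_vecMulVec hdet, mul_eq_zero, sub_eq_zero] at hsing
    exact (hsing.resolve_left hdet.ne_zero).symm
  have htrace : (Fintype.card m : K) = s.card :=
    calc (Fintype.card m : K) = trace (A⁻¹ * A) := by rw [nonsing_inv_mul A hdet, trace_one]
      _ = ∑ k ∈ s, (A⁻¹ *ᵥ v k) ⬝ᵥ z k := by
          simp only [A, Finset.mul_sum, trace_sum, mul_vecMulVec, trace_vecMulVec]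
      _ = s.card := by simp [Finset.sum_congr rfl hone]
  exact hs.ne (mod_cast htrace)

theorem span_eq_top_of_isUnit_sum_vecMulVec (hA : IsUnit (∑ i ∈ s, vecMulVec (v i) (z i))) :
    span K (Set.range fun i : s => z i) = ⊤ := by
  set A := ∑ i ∈ s, vecMulVec (v i) (z i)
  have hrows : span K (Set.range A.row) = ⊤ :=
    (linearIndependent_rows_iff_isUnit.mpr hA).span_eq_top_of_card_eq_finrank'
      (finrank_fintype_fun_eq_card K).symm
  refine eq_top_iff.mpr (hrows ▸ span_le.mpr ?_)
  rintro _ ⟨a, rfl⟩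
  have hrow : A.row a = ∑ i ∈ s, v i a • z i := by
    ext b
    simp [A, row, sum_apply, vecMulVec_apply]
  rw [hrow]
  exact sum_mem fun i hi => smul_mem _ _ (subset_span ⟨⟨i, hi⟩, rfl⟩)

theorem card_le_card_of_isUnit_sum_vecMulVec (hA : IsUnit (∑ i ∈ s, vecMulVec (v i) (z i))) :
    Fintype.card m ≤ s.card := by
  have := finrank_range_le_card (R := K) fun i : s => z i
  rwa [Set.finrank, span_eq_top_of_isUnit_sum_vecMulVec hA, finrank_top,
    finrank_fintype_fun_eq_card, Fintype.card_coe] at this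

theorem linearIndependent_of_isUnit_sum_vecMulVec
    (hA : IsUnit (∑ i ∈ s, vecMulVec (v i) (z i))) (hs : s.card ≤ Fintype.card m) :
    LinearIndependent K fun i : s => z i := by
  refine linearIndependent_of_top_le_span_of_card_eq_finrank
    (span_eq_top_of_isUnit_sum_vecMulVec hA).ge ?_
  rw [Fintype.card_coe, finrank_fintype_fun_eq_card]
  exact hs.antisymm (card_le_card_of_isUnit_sum_vecMulVec hA)

theorem isUnit_sum_vecMulVec_swap (hA : IsUnit (∑ i ∈ s, vecMulVec (v i) (z i))) :
    IsUnit (∑ i ∈ s, vecMulVec (z i) (v i)) := by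
  simpa [transpose_sum, transpose_vecMulVec] using (isUnit_transpose _).mpr hA

theorem exists_linearIndependent_of_isUnit_sum_vecMulVec [CharZero K]
    (hA : IsUnit (∑ i ∈ s, vecMulVec (v i) (z i))) :
    ∃ I ⊆ s, I.card = Fintype.card m ∧
      LinearIndependent K (fun i : I => v i) ∧ LinearIndependent K (fun i : I => z i) := by
  classical
  induction s using Finset.strongInduction with
  | H s ih =>
    rcases lt_or_ge (Fintype.card m) s.card with hlt | hle
    · obtain ⟨k, hk, hk'⟩ := exists_isUnit_sum_erase_vecMulVec hA hlt
      obtain ⟨I, hI, hIcard, hIv, hIz⟩ := ih _ (Finset.erase_ssubset hk) hk'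
      exact ⟨I, hI.trans (s.erase_subset k), hIcard, hIv, hIz⟩
    · have hz := linearIndependent_of_isUnit_sum_vecMulVec hA hle
      have hv := linearIndependent_of_isUnit_sum_vecMulVec (isUnit_sum_vecMulVec_swap hA) hle
      exact ⟨s, subset_rfl, hle.antisymm (card_le_card_of_isUnit_sum_vecMulVec hA), hv, hz⟩

end InvertibleSum

theorem exists_linearIndependent_card_eq_rank_sum_vecMulVec [CharZero K] [Fintype ι]
    [Fintype m] [Fintype n] (v : ι → m → K) (z : ι → n → K) :
    ∃ I : Finset ι, LinearIndependent K (fun i : I => v i) ∧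
      LinearIndependent K (fun i : I => z i) ∧ (∑ i, vecMulVec (v i) (z i)).rank = I.card := by
  obtain ⟨f, g, hfg⟩ := (∑ i, vecMulVec (v i) (z i)).exists_isUnit_submatrix
  have hsub : (∑ i, vecMulVec (v i) (z i)).submatrix f g =
      ∑ i ∈ Finset.univ, vecMulVec (v i ∘ f) (z i ∘ g) := by
    ext a b
    simp [sum_apply, vecMulVec_apply]
  rw [hsub] at hfg
  obtain ⟨I, -, hcard, hv, hz⟩ := exists_linearIndependent_of_isUnit_sum_vecMulVec hfg
  exact ⟨I, hv.of_comp (LinearMap.funLeft K K f), hz.of_comp (LinearMap.funLeft K K g),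
    by simpa using hcard.symm⟩

end Matrix

/-- the generic rank (maximum over parameters) of ∑ pᵢ wᵢ rᵢ equals
the maximum cardinality of a jointly independent subset I ⊆ {1,…,d}. -/
theorem generic_rank_eq_max_jointly_independent (d n₁ n₂ : ℕ)
    (w : Fin d → Fin n₁ → ℂ) (r : Fin d → Fin n₂ → ℂ) :
    (⨆ p : Fin d → ℂ,
        (∑ i, p i • Matrix.vecMulVec (w i) (r i)).rank) =
      ⨆ I : {I : Finset (Fin d) //
        LinearIndependent ℂ (fun i : I => w i) ∧
        LinearIndependent ℂ (fun i : I => r i)},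
        (I : Finset (Fin d)).card := by
  have hbdd : BddAbove (Set.range fun I : {I : Finset (Fin d) //
      LinearIndependent ℂ (fun i : I => w i) ∧ LinearIndependent ℂ (fun i : I => r i)} =>
        (I : Finset (Fin d)).card) :=
    (Set.finite_range _).bddAbove
  apply le_antisymm
  · refine ciSup_le' fun p => ?_
    obtain ⟨I, hw, hr, hrank⟩ :=
      exists_linearIndependent_card_eq_rank_sum_vecMulVec (fun i => p i • w i) r
    simp only [smul_vecMulVec] at hrank
    exact hrank.le.trans (le_ciSup hbdd ⟨I, hw.of_smul, hr⟩)
  · refine ciSup_le' fun ⟨I, hw, hr⟩ => ?_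
    have hindicator : ∑ i, (if i ∈ I then 1 else 0 : ℂ) • vecMulVec (w i) (r i) =
        ∑ i : I, vecMulVec (w i) (r i) := by
      rw [Finset.sum_coe_sort I fun i => vecMulVec (w i) (r i)]
      simp [ite_smul, Finset.sum_ite_mem]
    calc I.card = (∑ i : I, vecMulVec (w i) (r i)).rank := by
          rw [rank_sum_vecMulVec_of_linearIndependent hw hr, Fintype.card_coe]
      _ = (∑ i, (if i ∈ I then 1 else 0 : ℂ) • vecMulVec (w i) (r i)).rank := by
          rw [hindicator]
      _ ≤ _ := le_ciSup (f := fun p : Fin d → ℂ => (∑ i, p i • vecMulVec (w i) (r i)).rank)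
          ⟨n₂, Set.forall_mem_range.mpr fun p => rank_le_width _⟩ _
end

section
/- Let d, n₁, n₂ be natural numbers, let w₁, …, w_d ∈ ℂ^{n₁} be column vectors, and let r₁, …, r_d ∈ ℂ^{1×n₂} be row vectors. Then the maximum cardinality of a subset I ⊆ {1, …, d} such that the family (w_i)_{i ∈ I} is linearly independent and the family (r_i)_{i ∈ I} is linearly independent equals the minimum, over all subsets S ⊆ {1, …, d}, of (the rank of the matrix whose columns are the vectors w_i for i ∈ S) plus (the rank of the matrix whose rows are the vectors r_j for j ∈ {1, …, d} \ S). -/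
/-!
This is the matroid intersection theorem for the column matroid of the `w i` and the row matroid
of the `r i`. The inequality max ≤ min holds because an independent set `I` splits into `I ∩ S`
and `I \ S`. For the converse one inducts on the ground set, adding an element `e`: if `w e` or
`r e` vanishes, `e` can go into `S` or its complement for free. Otherwise compare the instance
without `e` with its contraction by `e`, i.e. the instance obtained by passing to the quotients
by the lines through `w e` and `r e`. A common independent set of the contraction extends by `e`,
and submodularity of the rank uncrosses the two optimal splittings into two splittings of the
larger ground set, one of which is tight for one of the two independent sets.
-/

open Module Submodule Set

variable {K ι V W : Type*} [Field K] [AddCommGroup V] [Module K V] [AddCommGroup W] [Module K W]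

theorem Set.finrank_insert_zero (s : Set V) : (insert 0 s).finrank K = s.finrank K := by
  rw [Set.finrank, span_insert_zero, Set.finrank]

theorem Set.finrank_insert_eq_finrank_image_mkQ_add_one [FiniteDimensional K V] {v : V}
    (hv : v ≠ 0) (s : Set V) : (insert v s).finrank K = ((K ∙ v).mkQ '' s).finrank K + 1 := by
  set p := span K (insert v s)
  have hvp : (K ∙ v) ≤ p := span_mono (singleton_subset_iff.mpr (mem_insert v s))
  have hrange : LinearMap.range ((K ∙ v).mkQ.domRestrict p) = span K ((K ∙ v).mkQ '' s) := by
    rw [LinearMap.range_domRestrict, map_span, image_insert_eq, mkQ_apply,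
      (Quotient.mk_eq_zero _).mpr (mem_span_singleton_self v), span_insert_zero]
  have hker : finrank K (LinearMap.ker ((K ∙ v).mkQ.domRestrict p)) = 1 := by
    rw [LinearMap.ker_domRestrict, ker_mkQ, (comapSubtypeEquivOfLe hvp).finrank_eq,
      finrank_span_singleton hv]
  have := LinearMap.finrank_range_add_finrank_ker ((K ∙ v).mkQ.domRestrict p)
  rw [hrange, hker] at this
  exact this.symm

theorem Set.finrank_union_add_finrank_inter_le [FiniteDimensional K V] (s t : Set V) :
    (s ∪ t).finrank K + (s ∩ t).finrank K ≤ s.finrank K + t.finrank K := by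
  have hinter : (s ∩ t).finrank K ≤ finrank K ↥(span K s ⊓ span K t) :=
    Submodule.finrank_mono (le_inf (span_mono inter_subset_left) (span_mono inter_subset_right))
  have := Submodule.finrank_sup_add_finrank_inf_eq (span K s) (span K t)
  rw [Set.finrank, span_union]
  exact this ▸ Nat.add_le_add_left hinter _

theorem finrank_image_union_add_finrank_image_inter_le [FiniteDimensional K V] (f : ι → V)
    (A B : Set ι) :
    (f '' (A ∪ B)).finrank K + (f '' (A ∩ B)).finrank K ≤
      (f '' A).finrank K + (f '' B).finrank K := by
  rw [image_union]
  exact (Nat.add_le_add_left (Set.finrank_mono (image_inter_subset f A B)) _).trans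
    (Set.finrank_union_add_finrank_inter_le _ _)

theorem finrank_image_insert_eq_finrank_image_mkQ_add_one [FiniteDimensional K V] {f : ι → V}
    {e : ι} (he : f e ≠ 0) (S : Set ι) :
    (f '' insert e S).finrank K = ((K ∙ f e).mkQ ∘ f '' S).finrank K + 1 := by
  rw [image_insert_eq, Set.finrank_insert_eq_finrank_image_mkQ_add_one he, image_comp]

theorem LinearIndepOn.insert_of_mkQ {f : ι → V} {e : ι} {I : Set ι} (he : f e ≠ 0)
    (h : LinearIndepOn K ((K ∙ f e).mkQ ∘ f) I) : LinearIndepOn K f (insert e I) := by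
  rw [insert_eq]
  exact (LinearIndepOn.singleton he).union_of_quotient (by rwa [image_singleton])

theorem LinearIndepOn.card_le_finrank_image [FiniteDimensional K V] {f : ι → V} {J : Finset ι}
    {S : Set ι} (h : LinearIndepOn K f J) (hJS : ↑J ⊆ S) : J.card ≤ (f '' S).finrank K := by
  have hcard : (f '' J).finrank K = J.card := by
    rw [Set.finrank, image_eq_range, finrank_span_eq_card h]
    simp
  exact hcard ▸ Set.finrank_mono (image_mono hJS)

theorem LinearIndepOn.card_le_finrank_add_finrank_compl [FiniteDimensional K V]
    [FiniteDimensional K W] {f : ι → V} {g : ι → W} {I : Finset ι} (hf : LinearIndepOn K f I)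
    (hg : LinearIndepOn K g I) (S : Set ι) :
    I.card ≤ (f '' S).finrank K + (g '' Sᶜ).finrank K := by
  classical
  rw [← Finset.card_filter_add_card_filter_not (· ∈ S)]
  have hsub {p : ι → Prop} [DecidablePred p] : ↑(I.filter p) ⊆ (I : Set ι) :=
    Finset.coe_subset.mpr (Finset.filter_subset p I)
  exact Nat.add_le_add
    ((hf.mono hsub).card_le_finrank_image fun _ hx => (Finset.mem_filter.mp hx).2)
    ((hg.mono hsub).card_le_finrank_image fun _ hx => (Finset.mem_filter.mp hx).2)

variable (K) in
/-- A common independent subset `I` of `G` and a covering `G ⊆ S ∪ T` whose ranks witness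
that `I` has maximum size. -/
def HasMinMaxCertificate (f : ι → V) (g : ι → W) (G : Finset ι) : Prop :=
  ∃ I : Finset ι, I ⊆ G ∧ LinearIndepOn K f I ∧ LinearIndepOn K g I ∧
    ∃ S T : Set ι, ↑G ⊆ S ∪ T ∧ (f '' S).finrank K + (g '' T).finrank K ≤ I.card

namespace HasMinMaxCertificate

variable {f : ι → V} {g : ι → W} {G : Finset ι} {e : ι}

theorem empty : HasMinMaxCertificate K f g ∅ :=
  ⟨∅, subset_rfl, by simp, by simp, ∅, ∅, by simp, by simp [Set.finrank_empty]⟩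

theorem insert_of_left_eq_zero [DecidableEq ι] (h : HasMinMaxCertificate K f g G)
    (hf : f e = 0) : HasMinMaxCertificate K f g (insert e G) := by
  obtain ⟨I, hIG, hIf, hIg, S, T, hST, hrk⟩ := h
  refine ⟨I, hIG.trans (Finset.subset_insert e G), hIf, hIg, insert e S, T, ?_, ?_⟩
  · rw [Finset.coe_insert, insert_union]
    exact insert_subset_insert hST
  · rwa [image_insert_eq, hf, Set.finrank_insert_zero]

theorem insert_of_right_eq_zero [DecidableEq ι] (h : HasMinMaxCertificate K f g G)
    (hg : g e = 0) : HasMinMaxCertificate K f g (insert e G) := by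
  obtain ⟨I, hIG, hIf, hIg, S, T, hST, hrk⟩ := h
  refine ⟨I, hIG.trans (Finset.subset_insert e G), hIf, hIg, S, insert e T, ?_, ?_⟩
  · rw [Finset.coe_insert, union_insert]
    exact insert_subset_insert hST
  · rwa [image_insert_eq, hg, Set.finrank_insert_zero]

theorem insert_of_ne_zero [DecidableEq ι] [FiniteDimensional K V] [FiniteDimensional K W]
    (h : HasMinMaxCertificate K f g G)
    (hquot : HasMinMaxCertificate K ((K ∙ f e).mkQ ∘ f) ((K ∙ g e).mkQ ∘ g) G)
    (he : e ∉ G) (hf : f e ≠ 0) (hg : g e ≠ 0) : HasMinMaxCertificate K f g (insert e G) := by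
  obtain ⟨I₁, hI₁G, hI₁f, hI₁g, S₁, T₁, hST₁, hrk₁⟩ := h
  obtain ⟨I₂, hI₂G, hI₂f, hI₂g, S₂, T₂, hST₂, hrk₂⟩ := hquot
  have hsub_f := finrank_image_union_add_finrank_image_inter_le (K := K) f S₁ (insert e S₂)
  have hsub_g := finrank_image_union_add_finrank_image_inter_le (K := K) g T₁ (insert e T₂)
  rw [finrank_image_insert_eq_finrank_image_mkQ_add_one hf] at hsub_f
  rw [finrank_image_insert_eq_finrank_image_mkQ_add_one hg] at hsub_g
  have hcover (S T : Set ι) (heST : e ∈ S ∪ T)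
      (hG : ∀ x ∈ G, x ∈ S₁ ∪ T₁ → x ∈ S₂ ∪ T₂ → x ∈ S ∪ T) : ↑(insert e G) ⊆ S ∪ T := by
    rw [Finset.coe_insert]
    rintro x (rfl | hx)
    exacts [heST, hG x hx (hST₁ hx) (hST₂ hx)]
  -- By submodularity the two uncrossed coverings have total rank at most `|I₁| + |I₂| + 2`.
  by_cases hsmall :
      (f '' (S₁ ∩ insert e S₂)).finrank K + (g '' (T₁ ∪ insert e T₂)).finrank K ≤ I₁.card
  · refine ⟨I₁, hI₁G.trans (Finset.subset_insert e G), hI₁f, hI₁g, _, _,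
      hcover _ _ (by simp) fun x _ => ?_, hsmall⟩
    simp only [mem_union, mem_inter_iff, mem_insert_iff]
    tauto
  · refine ⟨insert e I₂, Finset.insert_subset_insert e hI₂G, ?_, ?_,
      S₁ ∪ insert e S₂, T₁ ∩ insert e T₂, hcover _ _ (by simp) fun x _ => ?_, ?_⟩
    · rw [Finset.coe_insert]; exact hI₂f.insert_of_mkQ hf
    · rw [Finset.coe_insert]; exact hI₂g.insert_of_mkQ hg
    · simp only [mem_union, mem_inter_iff, mem_insert_iff]
      tauto
    · rw [Finset.card_insert_of_notMem fun h => he (hI₂G h)]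
      omega

end HasMinMaxCertificate

theorem hasMinMaxCertificate [FiniteDimensional K V] [FiniteDimensional K W]
    (f : ι → V) (g : ι → W) (G : Finset ι) : HasMinMaxCertificate K f g G := by
  classical
  induction G using Finset.induction_on generalizing V W with
  | empty => exact .empty
  | @insert e G he ih =>
    by_cases hf : f e = 0
    · exact (ih f g).insert_of_left_eq_zero hf
    by_cases hg : g e = 0
    · exact (ih f g).insert_of_right_eq_zero hg
    exact (ih f g).insert_of_ne_zero (ih _ _) he hf hg

/-- the maximum cardinality of a jointly independent subset
I ⊆ {1,…,d} equals the minimum over S ⊆ {1,…,d} of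
dim span {wᵢ : i ∈ S} + dim span {rⱼ : j ∉ S}. -/
theorem max_jointly_independent_eq_min (d n₁ n₂ : ℕ)
    (w : Fin d → Fin n₁ → ℂ) (r : Fin d → Fin n₂ → ℂ) :
    (⨆ I : {I : Finset (Fin d) //
        LinearIndependent ℂ (fun i : I => w i) ∧
        LinearIndependent ℂ (fun i : I => r i)},
        (I : Finset (Fin d)).card) =
      ⨅ S : Finset (Fin d),
        (Set.finrank ℂ (w '' ↑S) + Set.finrank ℂ (r '' ↑(Sᶜ))) := by
  classical
  apply le_antisymm
  · refine ciSup_le' fun I => le_ciInf fun S => ?_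
    rw [Finset.coe_compl]
    exact LinearIndepOn.card_le_finrank_add_finrank_compl I.2.1 I.2.2 _
  obtain ⟨I, -, hIw, hIr, S, T, hST, hrk⟩ := hasMinMaxCertificate (K := ℂ) w r Finset.univ
  have hcompl : (↑(S.toFinsetᶜ) : Set (Fin d)) ⊆ T := by
    rw [Finset.coe_compl, coe_toFinset]
    exact fun x hx => (hST (Finset.mem_coe.mpr (Finset.mem_univ x))).resolve_left hx
  calc _ ≤ (w '' ↑S.toFinset).finrank ℂ + (r '' ↑(S.toFinsetᶜ)).finrank ℂ :=
        ciInf_le (OrderBot.bddBelow _) S.toFinset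
    _ ≤ I.card := by
        rw [coe_toFinset]
        exact (Nat.add_le_add_left (Set.finrank_mono (image_mono hcompl)) _).trans hrk
    _ ≤ _ := le_ciSup (f := fun J : {J : Finset (Fin d) // _} => J.1.card)
        (finite_range _).bddAbove ⟨I, hIw, hIr⟩
end

section
/- Let d, n₁, n₂ be natural numbers. For each i ∈ {1, …, d}, let W_i be an n₁×α_i complex matrix and let R_i be a β_i×n₂ complex matrix, where α_i, β_i are arbitrary natural numbers. Then the maximum, over all choices of complex matrices P_i of size α_i×β_i for i ∈ {1, …, d}, of rank(∑_{i=1}^d W_i · P_i · R_i) equals the minimum, over all subsets S ⊆ {1, …, d}, of (the rank of the matrix W_S obtained by horizontally concatenating the matrices W_i for i ∈ S) plus (the rank of the matrix R_{complement} obtained by vertically stacking the matrices R_j for j ∈ {1, …, d} \ S). -/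
/-!
Let `U i` be the column space of `W i`, `B i` the row space of `R i`, and call
`dim (∑_{i ∈ S} U i) + dim (∑_{i ∉ S} B i)` the cut rank of `S`. Splitting `∑ W i P i R i` into
the terms with `i ∈ S` (columns in `∑_{i ∈ S} U i`) and those with `i ∉ S` (rows in
`∑_{i ∉ S} B i`) bounds its rank by every cut rank.

For the converse we induct on the minimum cut rank `r`. By submodularity the minimum cuts form a
lattice. Call a pair of nonzero `x ∈ U i`, `y ∈ B i` covered if some minimum cut `S` has
`x ∈ ∑_{j ∈ S} U j` and `y ∈ ∑_{j ∉ S} B j`. If all pairs were covered, comparing a minimum cut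
with the largest minimum cut avoiding `i` and the smallest one containing `i` would give, by
induction on `|S|`, `∑_{j ∈ S} U j = 0` for every minimum cut `S`, and symmetrically
`∑_{j ∉ S} B j = 0`, so `r = 0`. For `r > 0` we divide out an uncovered pair, `x` from the
columns and `y` from the rows; this lowers the minimum by at most one. A matrix of rank
`≥ r - 1` for the reduced data lifts to some `T = ∑ W i P i R i`, and adding a suitable multiple
of the rank-one matrix `x yᵀ`, which is of the form `W i (ξ ηᵀ) R i`, raises the rank to `≥ r`.
-/

open Module Submodule Matrix

section LinearAlgebra

variable {K V V' : Type*} [Field K] [AddCommGroup V] [Module K V] [AddCommGroup V'] [Module K V']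

theorem Submodule.finrank_map_add_finrank_inf_ker [FiniteDimensional K V] (f : V →ₗ[K] V')
    (Q : Submodule K V) :
    finrank K (Q.map f) + finrank K ↥(Q ⊓ LinearMap.ker f) = finrank K Q := by
  have h := (f.domRestrict Q).finrank_range_add_finrank_ker
  rwa [LinearMap.range_domRestrict, LinearMap.ker_domRestrict, ← finrank_map_subtype_eq,
    map_comap_subtype] at h

theorem Submodule.finrank_map_add_one_eq_of_mem [FiniteDimensional K V]
    {f : V →ₗ[K] V'} {x : V} (hf : LinearMap.ker f = K ∙ x) (hx : x ≠ 0) {Q : Submodule K V}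
    (hxQ : x ∈ Q) : finrank K (Q.map f) + 1 = finrank K Q := by
  rw [← Q.finrank_map_add_finrank_inf_ker f, hf,
    inf_eq_right.2 ((span_singleton_le_iff_mem x Q).2 hxQ), finrank_span_singleton hx]

theorem Submodule.finrank_map_eq_of_notMem [FiniteDimensional K V]
    {f : V →ₗ[K] V'} {x : V} (hf : LinearMap.ker f ≤ K ∙ x) {Q : Submodule K V}
    (hxQ : x ∉ Q) : finrank K (Q.map f) = finrank K Q := by
  rw [← Q.finrank_map_add_finrank_inf_ker f,
    ((disjoint_span_singleton_of_notMem hxQ).mono_right hf).eq_bot, finrank_bot, add_zero]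

theorem Submodule.finrank_le_finrank_map_add_one [FiniteDimensional K V]
    {f : V →ₗ[K] V'} {x : V} (hf : LinearMap.ker f = K ∙ x) (hx : x ≠ 0) (Q : Submodule K V) :
    finrank K Q ≤ finrank K (Q.map f) + 1 := by
  by_cases hxQ : x ∈ Q
  · exact (finrank_map_add_one_eq_of_mem hf hx hxQ).ge
  · exact (finrank_map_eq_of_notMem hf.le hxQ).ge.trans (Nat.le_succ _)

theorem Submodule.map_finset_sup {ι : Type*} (f : V →ₗ[K] V') (S : Finset ι)
    (U : ι → Submodule K V) : (S.sup U).map f = S.sup fun i => (U i).map f := by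
  simp only [Finset.sup_eq_iSup, map_iSup]

theorem Matrix.exists_ker_mulVecLin_eq {n : Type*} [Fintype n] (Q : Submodule K (n → K)) :
    ∃ (p : ℕ) (Φ : Matrix (Fin p) n K), LinearMap.ker Φ.mulVecLin = Q := by
  classical
  let e := (Module.finBasis K ((n → K) ⧸ Q)).equivFun
  refine ⟨_, LinearMap.toMatrix' (e.toLinearMap ∘ₗ Q.mkQ), ?_⟩
  rw [← Matrix.toLin'_apply', Matrix.toLin'_toMatrix', LinearEquiv.ker_comp, ker_mkQ]

end LinearAlgebra

namespace Matrix

variable {R m n ι : Type*} {α β : ι → Type*}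

def concatCols (S : Finset ι) (W : ∀ i, Matrix m (α i) R) : Matrix m ((i : S) × α i) R :=
  of fun a c => W c.1 a c.2

def stackRows (S : Finset ι) (X : ∀ i, Matrix (β i) n R) : Matrix ((i : S) × β i) n R :=
  of fun c b => X c.1 c.2 b

theorem stackRows_transpose (S : Finset ι) (X : ∀ i, Matrix (β i) n R) :
    (stackRows S X)ᵀ = concatCols S fun i => (X i)ᵀ :=
  rfl

variable [∀ i, Fintype (α i)]

theorem concatCols_mul_stackRows [Semiring R] (S : Finset ι) (W : ∀ i, Matrix m (α i) R)
    (X : ∀ i, Matrix (α i) n R) : concatCols S W * stackRows S X = ∑ i ∈ S, W i * X i := by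
  ext a b
  simp [concatCols, stackRows, mul_apply, Fintype.sum_sigma, Matrix.sum_apply,
    ← Finset.sum_coe_sort S]

theorem range_mulVecLin_concatCols [CommSemiring R] (S : Finset ι) (W : ∀ i, Matrix m (α i) R) :
    LinearMap.range (concatCols S W).mulVecLin =
      S.sup fun i => LinearMap.range (W i).mulVecLin := by
  rw [range_mulVecLin, Finset.sup_eq_iSup, ← Finset.iSup_coe, iSup_subtype',
    Set.range_sigma_eq_iUnion_range, span_iUnion]
  simp_rw [range_mulVecLin]
  rfl

section

variable {K : Type*} [Field K]

theorem rank_add_le [Fintype n] (A B : Matrix m n K) :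
    (A + B).rank ≤ A.rank + B.rank := by
  rw [rank, rank, rank, mulVecLin_add]
  exact (finrank_mono (LinearMap.range_add_le _ _)).trans (finrank_add_le_finrank_add_finrank _ _)

theorem exists_mulVec_add_smul_vecMulVec_notMem {n₁ n₂ : Type*} [Fintype n₂]
    (T : Matrix n₁ n₂ K) {Q : Submodule K (n₁ → K)} {x : n₁ → K} {y : n₂ → K} (hx : x ∉ Q)
    (hy : y ≠ 0) : ∃ (c : K) (v : n₂ → K), (T + c • vecMulVec x y) *ᵥ v ∉ Q := by
  classical
  obtain ⟨k, hk⟩ := Function.ne_iff.1 hy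
  have hv (c : K) :
      (T + c • vecMulVec x y) *ᵥ Pi.single k 1 = T *ᵥ Pi.single k 1 + (c * y k) • x := by
    ext a
    simp [vecMulVec_apply, mulVec_single, mul_comm, mul_left_comm]
  by_cases hT : T *ᵥ Pi.single k 1 ∈ Q
  · refine ⟨(y k)⁻¹, Pi.single k 1, fun h => hx ?_⟩
    rw [hv, inv_mul_cancel₀ hk, one_smul] at h
    simpa using Q.sub_mem h hT
  · exact ⟨0, Pi.single k 1, by simpa using hT⟩

theorem exists_rank_lt_rank_add_smul_vecMulVec {m₁ m₂ n₁ n₂ : Type*} [Fintype m₂]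
    [Fintype n₁] [Fintype n₂] (T : Matrix n₁ n₂ K) {Φ : Matrix m₁ n₁ K} {Ψ : Matrix m₂ n₂ K}
    {x : n₁ → K} {y : n₂ → K} (hΦ : LinearMap.ker Φ.mulVecLin = K ∙ x) (hx : x ≠ 0)
    (hΨ : Ψ *ᵥ y = 0) (hy : y ≠ 0) :
    ∃ c : K, (Φ * T * Ψᵀ).rank < (T + c • vecMulVec x y).rank := by
  set A := T * Ψᵀ
  have hA (c : K) : (T + c • vecMulVec x y) * Ψᵀ = A := by
    ext
    simp [A, Matrix.add_mul, vecMulVec_mul, vecMul_transpose, hΨ, vecMulVec_apply]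
  have hle (c : K) : LinearMap.range A.mulVecLin ≤
      LinearMap.range (T + c • vecMulVec x y).mulVecLin := by
    rw [← hA c, mulVecLin_mul]
    exact LinearMap.range_comp_le_range _ _
  rw [Matrix.mul_assoc]
  -- Either `Φ` kills a direction of `range A`, or some `T + c • x yᵀ` leaves `range A`.
  by_cases hxA : x ∈ LinearMap.range A.mulVecLin
  · refine ⟨0, ?_⟩
    calc (Φ * A).rank < A.rank := by
          rw [rank, rank, mulVecLin_mul, LinearMap.range_comp,
            ← finrank_map_add_one_eq_of_mem hΦ hx hxA]
          exact Nat.lt_succ_self _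
      _ ≤ _ := finrank_mono (hle 0)
  · obtain ⟨c, v, hv⟩ := exists_mulVec_add_smul_vecMulVec_notMem T hxA hy
    refine ⟨c, (rank_mul_le_right Φ A).trans_lt (finrank_lt_finrank_of_lt ?_)⟩
    exact lt_of_le_of_ne (hle c) fun h => hv (h ▸ ⟨v, rfl⟩)

end

end Matrix

namespace GenericRank

section Cuts

variable {K V₁ V₂ ι : Type*} [Field K] [AddCommGroup V₁] [Module K V₁] [AddCommGroup V₂]
  [Module K V₂] [Fintype ι] [DecidableEq ι]

noncomputable def cutRank (U : ι → Submodule K V₁) (B : ι → Submodule K V₂) (S : Finset ι) :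
    ℕ :=
  finrank K ↥(S.sup U) + finrank K ↥(Sᶜ.sup B)

def IsMinCut (U : ι → Submodule K V₁) (B : ι → Submodule K V₂) (S : Finset ι) : Prop :=
  ∀ T, cutRank U B S ≤ cutRank U B T

variable {U : ι → Submodule K V₁} {B : ι → Submodule K V₂} {S T P : Finset ι} {i : ι}

theorem exists_isMinCut (U : ι → Submodule K V₁) (B : ι → Submodule K V₂) :
    ∃ S, IsMinCut U B S := by
  obtain ⟨S, -, hS⟩ := Finset.exists_min_image Finset.univ (cutRank U B) Finset.univ_nonempty
  exact ⟨S, fun T => hS T (Finset.mem_univ T)⟩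

theorem cutRank_swap_compl : cutRank B U Sᶜ = cutRank U B S := by
  rw [cutRank, cutRank, compl_compl, add_comm]

theorem isMinCut_swap_compl : IsMinCut B U Sᶜ ↔ IsMinCut U B S := by
  refine ⟨fun h T => ?_, fun h T => ?_⟩
  · simpa only [cutRank_swap_compl] using h Tᶜ
  · rw [cutRank_swap_compl, ← compl_compl T, cutRank_swap_compl]
    exact h Tᶜ

def IsCoveredByMinCuts (U : ι → Submodule K V₁) (B : ι → Submodule K V₂) : Prop :=
  ∀ i, ∀ x ∈ U i, ∀ y ∈ B i, x ≠ 0 → y ≠ 0 →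
    ∃ S, IsMinCut U B S ∧ x ∈ S.sup U ∧ y ∈ Sᶜ.sup B

theorem IsCoveredByMinCuts.swap (h : IsCoveredByMinCuts U B) : IsCoveredByMinCuts B U := by
  intro i y hy x hx hy0 hx0
  obtain ⟨S, hS, hxS, hyS⟩ := h i x hx y hy hx0 hy0
  exact ⟨Sᶜ, isMinCut_swap_compl.2 hS, hyS, by rwa [compl_compl]⟩

theorem IsMinCut.erase [FiniteDimensional K V₁] (hP : IsMinCut U B P) (hBi : B i ≤ Pᶜ.sup B) :
    IsMinCut U B (P.erase i) ∧ (P.erase i).sup U = P.sup U := by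
  have hB : (P.erase i)ᶜ.sup B = Pᶜ.sup B := by
    rw [Finset.compl_erase, Finset.sup_insert, sup_eq_right.2 hBi]
  have hle : (P.erase i).sup U ≤ P.sup U := Finset.sup_mono (Finset.erase_subset i P)
  have h := hP (P.erase i)
  rw [cutRank, cutRank, hB] at h
  have hU := eq_of_le_of_finrank_le hle (by omega)
  refine ⟨fun T => ?_, hU⟩
  rw [cutRank, hB, hU]
  exact hP T

section FiniteDimensional

variable [FiniteDimensional K V₁] [FiniteDimensional K V₂]

theorem IsMinCut.inter_union (hS : IsMinCut U B S) (hT : IsMinCut U B T) :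
    IsMinCut U B (S ∩ T) ∧ IsMinCut U B (S ∪ T) ∧ (S ∩ T).sup U = S.sup U ⊓ T.sup U := by
  have hU := finrank_sup_add_finrank_inf_eq (S.sup U) (T.sup U)
  have hB := finrank_sup_add_finrank_inf_eq (Sᶜ.sup B) (Tᶜ.sup B)
  rw [← Finset.sup_union] at hU
  rw [← Finset.sup_union, ← Finset.compl_inter] at hB
  have hUle : (S ∩ T).sup U ≤ S.sup U ⊓ T.sup U :=
    le_inf (Finset.sup_mono Finset.inter_subset_left) (Finset.sup_mono Finset.inter_subset_right)
  have hBle : (S ∪ T)ᶜ.sup B ≤ Sᶜ.sup B ⊓ Tᶜ.sup B := by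
    rw [Finset.compl_union]
    exact le_inf (Finset.sup_mono Finset.inter_subset_left)
      (Finset.sup_mono Finset.inter_subset_right)
  have hUle' := finrank_mono hUle
  have hBle' := finrank_mono hBle
  have hinter := hS (S ∩ T)
  have hunion := hS (S ∪ T)
  have hTS := hT S
  have hST := hS T
  simp only [cutRank] at hinter hunion hTS hST
  -- `cutRank (S ∩ T) + cutRank (S ∪ T) ≤ cutRank S + cutRank T`, with the defects of `hUle` and
  -- `hBle` as slack; minimality of `S` and `T` forces equality throughout.
  refine ⟨fun X => ?_, fun X => ?_, eq_of_le_of_finrank_le hUle (by omega)⟩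
  · exact le_trans (by simp only [cutRank]; omega) (hS X)
  · exact le_trans (by simp only [cutRank]; omega) (hS X)

theorem IsMinCut.exists_greatest_notMem (hS : IsMinCut U B S) (hi : i ∉ S) :
    ∃ N, IsMinCut U B N ∧ i ∉ N ∧ ∀ T, IsMinCut U B T → i ∉ T → T ⊆ N := by
  classical
  let 𝒮 := Finset.univ.filter fun T => IsMinCut U B T ∧ i ∉ T
  obtain ⟨N, hN𝒮, hNmax⟩ := Finset.exists_max_image 𝒮 Finset.card ⟨S, by simp [𝒮, hS, hi]⟩
  obtain ⟨hN, hiN⟩ := (Finset.mem_filter.1 hN𝒮).2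
  refine ⟨N, hN, hiN, fun T hT hiT => Finset.union_eq_left.1 ?_⟩
  refine (Finset.eq_of_subset_of_card_le Finset.subset_union_left (hNmax _ ?_)).symm
  simp [𝒮, (hN.inter_union hT).2.1, hiN, hiT]

theorem IsMinCut.exists_least_mem (hS : IsMinCut U B S) (hi : i ∈ S) :
    ∃ P, IsMinCut U B P ∧ i ∈ P ∧ ∀ T, IsMinCut U B T → i ∈ T → P ⊆ T := by
  obtain ⟨N, hN, hiN, hNmax⟩ :=
    (isMinCut_swap_compl.2 hS).exists_greatest_notMem (Finset.notMem_compl.2 hi)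
  refine ⟨Nᶜ, isMinCut_swap_compl.1 (by rwa [compl_compl]), Finset.mem_compl.2 hiN,
    fun T hT hiT => ?_⟩
  exact compl_le_iff_compl_le.1 (hNmax _ (isMinCut_swap_compl.2 hT) (Finset.notMem_compl.2 hiT))

theorem IsCoveredByMinCuts.eq_bot_or_exists (h : IsCoveredByMinCuts U B)
    (hS : IsMinCut U B S) (hi : i ∈ S) :
    U i = ⊥ ∨ ∃ T, IsMinCut U B T ∧ i ∉ T ∧ U i ≤ T.sup U := by
  obtain ⟨P, hP, hiP, hPle⟩ := hS.exists_least_mem hi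
  by_cases hBi : B i ≤ Pᶜ.sup B
  · -- then `i` can be moved out of the least minimum cut `P` containing it
    obtain ⟨hPe, hU⟩ := hP.erase hBi
    exact .inr ⟨P.erase i, hPe, Finset.notMem_erase i P, hU ▸ Finset.le_sup hiP⟩
  obtain ⟨y, hy, hyP⟩ := SetLike.not_le_iff_exists.1 hBi
  have hy0 : y ≠ 0 := by rintro rfl; exact hyP (zero_mem _)
  -- a minimum cut containing `i` contains `P`, so it cannot cover `y`
  have hcut : ∀ x ∈ U i, x ≠ 0 → ∃ T, IsMinCut U B T ∧ i ∉ T ∧ x ∈ T.sup U := by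
    intro x hx hx0
    obtain ⟨T, hT, hxT, hyT⟩ := h i x hx y hy hx0 hy0
    refine ⟨T, hT, fun hiT => hyP ?_, hxT⟩
    exact Finset.sup_mono (f := B) (Finset.compl_subset_compl.2 (hPle T hT hiT)) hyT
  by_cases hex : ∃ T, IsMinCut U B T ∧ i ∉ T
  · obtain ⟨T, hT, hiT⟩ := hex
    obtain ⟨N, hN, hiN, hNmax⟩ := hT.exists_greatest_notMem hiT
    refine .inr ⟨N, hN, hiN, fun x hx => ?_⟩
    rcases eq_or_ne x 0 with rfl | hx0
    · exact zero_mem _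
    obtain ⟨T', hT', hiT', hxT'⟩ := hcut x hx hx0
    exact Finset.sup_mono (f := U) (hNmax T' hT' hiT') hxT'
  · refine .inl ((Submodule.eq_bot_iff _).2 fun x hx => by_contra fun hx0 => hex ?_)
    obtain ⟨T, hT, hiT, -⟩ := hcut x hx hx0
    exact ⟨T, hT, hiT⟩

theorem IsCoveredByMinCuts.sup_eq_bot (h : IsCoveredByMinCuts U B) (hS : IsMinCut U B S) :
    S.sup U = ⊥ := by
  induction S using Finset.strongInduction with
  | H S ih =>
    refine eq_bot_iff.2 (Finset.sup_le fun i hi => ?_)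
    rcases h.eq_bot_or_exists hS hi with hUi | ⟨T, hT, hiT, hUT⟩
    · exact hUi.le
    · have hST := hS.inter_union hT
      have hsub : S ∩ T ⊂ S :=
        Finset.ssubset_iff_subset_ne.2 ⟨Finset.inter_subset_left, fun heq => hiT
          (Finset.mem_of_mem_inter_right (by rwa [heq]))⟩
      rw [← ih _ hsub hST.1, hST.2.2]
      exact le_inf (Finset.le_sup hi) hUT

theorem not_isCoveredByMinCuts (hpos : ∀ S, 0 < cutRank U B S) : ¬ IsCoveredByMinCuts U B := by
  intro h
  obtain ⟨S, hS⟩ := exists_isMinCut U B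
  have hpos := hpos S
  rw [cutRank, h.sup_eq_bot hS, h.swap.sup_eq_bot (isMinCut_swap_compl.2 hS)] at hpos
  simp at hpos

end FiniteDimensional

section Map

variable {W₁ W₂ : Type*} [AddCommGroup W₁] [Module K W₁] [AddCommGroup W₂] [Module K W₂]

theorem cutRank_map (f : V₁ →ₗ[K] W₁) (g : V₂ →ₗ[K] W₂) (S : Finset ι) :
    cutRank (fun i => (U i).map f) (fun i => (B i).map g) S =
      finrank K ((S.sup U).map f) + finrank K ((Sᶜ.sup B).map g) := by
  rw [cutRank, Submodule.map_finset_sup, Submodule.map_finset_sup]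

theorem le_cutRank_map [FiniteDimensional K V₁] [FiniteDimensional K V₂] {r : ℕ}
    (hmin : ∀ S, r + 1 ≤ cutRank U B S) {f : V₁ →ₗ[K] W₁} {g : V₂ →ₗ[K] W₂} {x : V₁} {y : V₂}
    (hf : LinearMap.ker f = K ∙ x) (hx : x ≠ 0) (hg : LinearMap.ker g = K ∙ y) (hy : y ≠ 0)
    (hxy : ∀ S, IsMinCut U B S → x ∈ S.sup U → y ∉ Sᶜ.sup B) (S : Finset ι) :
    r ≤ cutRank (fun i => (U i).map f) (fun i => (B i).map g) S := by
  have hU := finrank_le_finrank_map_add_one hf hx (S.sup U)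
  have hB := finrank_le_finrank_map_add_one hg hy (Sᶜ.sup B)
  rw [cutRank_map]
  by_cases hS : IsMinCut U B S
  · have h := hmin S
    rw [cutRank] at h
    by_cases hxS : x ∈ S.sup U
    · have := finrank_map_eq_of_notMem hg.le (hxy S hS hxS)
      omega
    · have := finrank_map_eq_of_notMem hf.le hxS
      omega
  · obtain ⟨T, hT⟩ := not_forall.1 hS
    have h := hmin T
    simp only [cutRank] at hT h
    omega

end Map

end Cuts

section Matrices

variable {K ι : Type*} [Field K] [Fintype ι] [DecidableEq ι] {α β : ι → Type*}
  [∀ i, Fintype (α i)] [∀ i, Fintype (β i)]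

theorem rank_concatCols_add_rank_stackRows {m n : Type*} [Fintype m] [Fintype n]
    (W : ∀ i, Matrix m (α i) K) (R : ∀ i, Matrix (β i) n K) (S : Finset ι) :
    (concatCols S W).rank + (stackRows Sᶜ R).rank =
      cutRank (fun i => LinearMap.range (W i).mulVecLin)
        (fun i => LinearMap.range (R i)ᵀ.mulVecLin) S := by
  rw [cutRank, ← rank_transpose (stackRows Sᶜ R), stackRows_transpose, rank, rank,
    range_mulVecLin_concatCols, range_mulVecLin_concatCols]

theorem rank_sum_mul_mul_le {m n : Type*} [Fintype n] (W : ∀ i, Matrix m (α i) K)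
    (P : ∀ i, Matrix (α i) (β i) K) (R : ∀ i, Matrix (β i) n K) (S : Finset ι) :
    (∑ i, W i * P i * R i).rank ≤ (concatCols S W).rank + (stackRows Sᶜ R).rank := by
  rw [← Finset.sum_add_sum_compl S]
  refine (rank_add_le _ _).trans (add_le_add ?_ ?_)
  · simp_rw [Matrix.mul_assoc, ← concatCols_mul_stackRows]
    exact rank_mul_le_left _ _
  · rw [← concatCols_mul_stackRows]
    exact rank_mul_le_right _ _

theorem sum_mul_add_single_mul {m n : Type*} (W : ∀ i, Matrix m (α i) K)
    (P : ∀ i, Matrix (α i) (β i) K) (R : ∀ i, Matrix (β i) n K) (i : ι)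
    (D : Matrix (α i) (β i) K) :
    ∑ j, W j * (P + Pi.single i D : ∀ j, Matrix (α j) (β j) K) j * R j =
      ∑ j, W j * P j * R j + W i * D * R i := by
  simp only [Pi.add_apply, Matrix.mul_add, Matrix.add_mul, Finset.sum_add_distrib]
  congr 1
  rw [Fintype.sum_eq_single i fun j hj => by simp [Pi.single_eq_of_ne hj], Pi.single_eq_same]

theorem exists_le_rank_sum_mul_mul (r : ℕ) {n₁ n₂ : ℕ} (W : ∀ i, Matrix (Fin n₁) (α i) K)
    (R : ∀ i, Matrix (β i) (Fin n₂) K)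
    (h : ∀ S, r ≤ cutRank (fun i => LinearMap.range (W i).mulVecLin)
      (fun i => LinearMap.range (R i)ᵀ.mulVecLin) S) :
    ∃ P : ∀ i, Matrix (α i) (β i) K, r ≤ (∑ i, W i * P i * R i).rank := by
  induction r generalizing n₁ n₂ with
  | zero => exact ⟨0, Nat.zero_le _⟩
  | succ r ih =>
    have hcov := not_isCoveredByMinCuts fun S => (h S).trans_lt' r.succ_pos
    simp only [IsCoveredByMinCuts, not_forall, not_exists, not_and] at hcov
    obtain ⟨i, -, ⟨ξ, rfl⟩, -, ⟨η, rfl⟩, hx, hy, hxy⟩ := hcov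
    obtain ⟨p, Φ, hΦ⟩ := exists_ker_mulVecLin_eq (K ∙ W i *ᵥ ξ)
    obtain ⟨q, Ψ, hΨ⟩ := exists_ker_mulVecLin_eq (K ∙ (R i)ᵀ *ᵥ η)
    obtain ⟨P, hP⟩ := ih (fun j => Φ * W j) (fun j => R j * Ψᵀ) fun S => by
      simpa only [mulVecLin_mul, LinearMap.range_comp, transpose_mul, transpose_transpose]
        using le_cutRank_map h hΦ hx hΨ hy hxy S
    have hΨη : Ψ *ᵥ ((R i)ᵀ *ᵥ η) = 0 := by
      rw [← mulVecLin_apply, ← LinearMap.mem_ker, hΨ]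
      exact mem_span_singleton_self _
    obtain ⟨c, hc⟩ :=
      exists_rank_lt_rank_add_smul_vecMulVec (∑ j, W j * P j * R j) hΦ hx hΨη hy
    refine ⟨P + Pi.single i (c • vecMulVec ξ η), ?_⟩
    rw [sum_mul_add_single_mul, Matrix.mul_smul, Matrix.smul_mul, mul_vecMulVec, vecMulVec_mul,
      ← mulVec_transpose]
    refine lt_of_le_of_lt ?_ hc
    simpa only [Matrix.mul_sum, Matrix.sum_mul, Matrix.mul_assoc] using hP

end Matrices

end GenericRank

/-- the generic rank (maximum over the matrix parameters Pᵢ) of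
∑ Wᵢ Pᵢ Rᵢ equals the minimum over S ⊆ {1,…,d} of
rank W_S + rank R_{Sᶜ}, where W_S is the horizontal concatenation of the Wᵢ,
i ∈ S, and R_{Sᶜ} is the vertical stacking of the Rⱼ, j ∉ S. -/
theorem generic_rank_matrices_eq_min (d n₁ n₂ : ℕ) (α β : Fin d → ℕ)
    (W : ∀ i, Matrix (Fin n₁) (Fin (α i)) ℂ)
    (R : ∀ i, Matrix (Fin (β i)) (Fin n₂) ℂ) :
    (⨆ P : ∀ i, Matrix (Fin (α i)) (Fin (β i)) ℂ,
        (∑ i, W i * P i * R i).rank) =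
      ⨅ S : Finset (Fin d),
        ((Matrix.of fun (a : Fin n₁) (c : (i : S) × Fin (α i.1)) =>
            W c.1 a c.2).rank +
          (Matrix.of fun (c : (j : ↥(Sᶜ)) × Fin (β j.1)) (b : Fin n₂) =>
            R c.1 c.2 b).rank) := by
  refine le_antisymm (ciSup_le fun P => le_ciInf fun S => ?_) ?_
  · exact GenericRank.rank_sum_mul_mul_le W P R S
  · obtain ⟨P, hP⟩ := GenericRank.exists_le_rank_sum_mul_mul _ W R fun S => by
      rw [← GenericRank.rank_concatCols_add_rank_stackRows]
      exact ciInf_le (OrderBot.bddBelow _) S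
    have hbdd : BddAbove (Set.range fun P : ∀ i, Matrix (Fin (α i)) (Fin (β i)) ℂ =>
        (∑ i, W i * P i * R i).rank) :=
      ⟨n₁, Set.forall_mem_range.2 fun Q => rank_le_height _⟩
    exact hP.trans (le_ciSup hbdd P)
end

section
/- Let d, n₁, n₂ be natural numbers. For each i ∈ {1, …, d}, let W_i be an n₁×α_i complex matrix and let R_i be a β_i×n₂ complex matrix. Consider the index set P of all triples (i, a, b) with i ∈ {1, …, d}, a ∈ {1, …, α_i}, b ∈ {1, …, β_i}, where the triple (i, a, b) is associated with the pair consisting of the a-th column of W_i and the b-th row of R_i. Then the maximum, over all choices of complex matrices P_i of size α_i×β_i, of rank(∑_{i=1}^d W_i · P_i · R_i) equals the maximum cardinality of a subset I ⊆ P such that the family of associated column vectors indexed by I (with repetitions counted) is linearly independent and the family of associated row vectors indexed by I (with repetitions counted) is linearly independent. -/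
/-!
Write `∑ i, W i * P i * R i` as `U * diagonal c * V`, where the columns of `U` are the columns of
the `W i`, the rows of `V` are the rows of the `R i`, and `c` lists the entries of the `P i`, all
indexed by the triples `(i, a, b)`. Taking `c` to be the indicator of a jointly independent set `I`
gives a product of a matrix with independent columns and one with independent rows, of rank `#I`.
Conversely, if the product has rank `r`, it has a nonsingular `r × r` minor, which factors through
the triples; by Cauchy–Binet some `r` triples give a nonsingular minor both of `U` and of
`diagonal c * V`, so their columns of `U` and rows of `V` are independent.
-/

open Matrix Finset Function
open Equiv (Perm)

namespace Matrix

section CauchyBinet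

variable {R : Type*} [CommRing R] {n κ : Type*} [Fintype n] [DecidableEq n] [Fintype κ]

theorem det_mul_eq_sum_det_submatrix_mul_prod (A : Matrix n κ R) (B : Matrix κ n R) :
    (A * B).det = ∑ p : n → κ, (A.submatrix id p).det * ∏ i, B (p i) i := by
  calc (A * B).det
      = ∑ p : n → κ, ∑ σ : Perm n,
          (Perm.sign σ : R) * ∏ i, (A (σ i) (p i) * B (p i) i) := by
        simp only [det_apply', mul_apply, prod_univ_sum, mul_sum, Fintype.piFinset_univ]
        exact Finset.sum_comm
    _ = _ := by
        simp only [det_apply', submatrix_apply, id_eq, prod_mul_distrib, sum_mul, mul_assoc]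

/-- Cauchy–Binet without an ordering of `κ`: each subset of `κ` of size `card n` is the range of
`card (Perm n)` injective maps `p`, and non-injective `p` contribute `0`. -/
theorem sum_det_submatrix_mul_det_submatrix (A : Matrix n κ R) (B : Matrix κ n R) :
    ∑ p : n → κ, (A.submatrix id p).det * (B.submatrix p id).det =
      Fintype.card (Perm n) • (A * B).det := by
  have reindex (σ : Perm n) : ∑ p : n → κ,
      (Perm.sign σ : R) * ((A.submatrix id p).det * ∏ i, B (p (σ i)) i) = (A * B).det := by
    rw [det_mul_eq_sum_det_submatrix_mul_prod,
      ← (Equiv.arrowCongr σ (Equiv.refl κ)).sum_comp]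
    refine Finset.sum_congr rfl fun q _ => ?_
    have hq : A.submatrix id (Equiv.arrowCongr σ (Equiv.refl κ) q) =
        (A.submatrix id q).submatrix id σ.symm := rfl
    have hsign : (Perm.sign σ : R) * Perm.sign σ = 1 := by
      rw [← Int.cast_mul, ← Units.val_mul, Int.units_mul_self, Units.val_one, Int.cast_one]
    rw [hq, det_permute', Perm.sign_symm, ← mul_assoc, ← mul_assoc, hsign, one_mul]
    simp only [Equiv.arrowCongr_apply, Equiv.coe_refl, Function.comp_apply,
      Equiv.symm_apply_apply, id_eq]
  calc ∑ p : n → κ, (A.submatrix id p).det * (B.submatrix p id).det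
      = ∑ σ : Perm n, ∑ p : n → κ,
          (Perm.sign σ : R) * ((A.submatrix id p).det * ∏ i, B (p (σ i)) i) := by
        rw [Finset.sum_comm]
        refine Finset.sum_congr rfl fun p _ => ?_
        simp only [det_apply' (B.submatrix p id), submatrix_apply, id_eq, mul_sum]
        exact Finset.sum_congr rfl fun σ _ => by ring
    _ = Fintype.card (Perm n) • (A * B).det := by
        simp only [reindex, sum_const, card_univ]

theorem exists_det_submatrix_ne_zero_of_det_mul_ne_zero [IsDomain R] [CharZero R]
    {A : Matrix n κ R} {B : Matrix κ n R} (h : (A * B).det ≠ 0) :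
    ∃ p : n → κ, (A.submatrix id p).det ≠ 0 ∧ (B.submatrix p id).det ≠ 0 := by
  have hsum : ∑ p : n → κ, (A.submatrix id p).det * (B.submatrix p id).det ≠ 0 := by
    rw [sum_det_submatrix_mul_det_submatrix]
    exact smul_ne_zero Fintype.card_ne_zero h
  obtain ⟨p, -, hp⟩ := Finset.exists_ne_zero_of_sum_ne_zero hsum
  exact ⟨p, mul_ne_zero_iff.mp hp⟩

end CauchyBinet

section Domain

variable {R : Type*} [CommRing R] [IsDomain R] {m n ι : Type*} [Fintype ι] [DecidableEq ι]

theorem linearIndependent_col_comp_of_det_submatrix_ne_zero {A : Matrix m n R} {s : ι → m}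
    {t : ι → n} (h : (A.submatrix s t).det ≠ 0) :
    LinearIndependent R (A.col ∘ t) :=
  .of_comp (LinearMap.funLeft R R s) (linearIndependent_cols_of_det_ne_zero h)

theorem linearIndependent_row_comp_of_det_submatrix_ne_zero {A : Matrix m n R} {s : ι → m}
    {t : ι → n} (h : (A.submatrix s t).det ≠ 0) :
    LinearIndependent R (A.row ∘ s) :=
  linearIndependent_col_comp_of_det_submatrix_ne_zero (A := Aᵀ)
    (by rwa [← transpose_submatrix, det_transpose])

end Domain

section Field

variable {K : Type*} [Field K] {l m n : Type*}

theorem exists_linearIndependent_col_comp [Fintype n] {r : ℕ} (A : Matrix m n K)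
    (hr : A.rank = r) :
    ∃ t : Fin r → n, LinearIndependent K (A.col ∘ t) := by
  obtain ⟨ι, a, ha, hspan, hli⟩ := exists_linearIndependent' K A.col
  have : Fintype ι := Fintype.ofInjective a ha
  have hcard : Fintype.card ι = r := by
    rw [← hr, rank_eq_finrank_span_cols, ← hspan, finrank_span_eq_card hli]
  let e := (Fintype.equivFinOfCardEq hcard).symm
  exact ⟨a ∘ e, hli.comp e e.injective⟩

theorem exists_det_submatrix_ne_zero [Fintype m] [Fintype n] (A : Matrix m n K) :
    ∃ (s : Fin A.rank → m) (t : Fin A.rank → n), (A.submatrix s t).det ≠ 0 := by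
  obtain ⟨t, ht⟩ := exists_linearIndependent_col_comp A rfl
  have hrank : (A.submatrix id t)ᵀ.rank = A.rank := by
    simpa using LinearIndependent.rank_matrix (M := (A.submatrix id t)ᵀ) ht
  obtain ⟨s, hs⟩ := exists_linearIndependent_col_comp _ hrank
  exact ⟨s, t, ((isUnit_iff_isUnit_det _).mp (linearIndependent_rows_iff_isUnit.mp hs)).ne_zero⟩

theorem rank_mul_eq_right_of_linearIndependent_col [Fintype m] [Fintype n] {A : Matrix l m K}
    (hA : LinearIndependent K A.col) (B : Matrix m n K) : (A * B).rank = B.rank := by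
  have hinj : Function.Injective A.mulVecLin := by
    rwa [coe_mulVecLin, mulVec_injective_iff]
  rw [rank, rank, mulVecLin_mul, LinearMap.range_comp]
  exact (LinearEquiv.finrank_eq (Submodule.equivMapOfInjective _ hinj _)).symm

theorem exists_linearIndepOn_rank_mul_diagonal_mul_le [CharZero K] [Fintype m] [Fintype n]
    {κ : Type*} [Fintype κ] [DecidableEq κ] (U : Matrix m κ K) (c : κ → K)
    (V : Matrix κ n K) :
    ∃ I : Finset κ, LinearIndepOn K U.col I ∧ LinearIndepOn K V.row I ∧
      (U * diagonal c * V).rank ≤ #I := by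
  obtain ⟨s, t, hst⟩ := exists_det_submatrix_ne_zero (U * diagonal c * V)
  have hsplit : (U * diagonal c * V).submatrix s t =
      U.submatrix s id * (diagonal c * V).submatrix id t :=
    (congrArg (·.submatrix s t) (Matrix.mul_assoc U _ V)).trans
      (submatrix_mul _ _ s id t bijective_id)
  rw [hsplit] at hst
  obtain ⟨p, hU, hcV⟩ := exists_det_submatrix_ne_zero_of_det_mul_ne_zero hst
  have hdiag : ((diagonal c * V).submatrix id t).submatrix p id =
      diagonal (c ∘ p) * V.submatrix p t := by
    ext i j
    simp only [submatrix_apply, id_eq, diagonal_mul, Function.comp_apply]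
  rw [hdiag, det_mul] at hcV
  rw [submatrix_submatrix, comp_id, id_comp] at hU
  have hUp : LinearIndependent K (U.col ∘ p) :=
    linearIndependent_col_comp_of_det_submatrix_ne_zero hU
  have hVp : LinearIndependent K (V.row ∘ p) :=
    linearIndependent_row_comp_of_det_submatrix_ne_zero (right_ne_zero_of_mul hcV)
  have hp : Injective p := hUp.injective.of_comp
  refine ⟨univ.image p, ?_, ?_, ?_⟩
  · rwa [coe_image, coe_univ, Set.image_univ, linearIndepOn_range_iff hp]
  · rwa [coe_image, coe_univ, Set.image_univ, linearIndepOn_range_iff hp]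
  · rw [card_image_of_injective _ hp, card_univ, Fintype.card_fin]

theorem rank_mul_diagonal_indicator_mul [Fintype n] {κ : Type*} [Fintype κ] [DecidableEq κ]
    (U : Matrix m κ K) (V : Matrix κ n K) {I : Finset κ} (hU : LinearIndepOn K U.col I)
    (hV : LinearIndepOn K V.row I) :
    (U * diagonal (fun k => if k ∈ I then (1 : K) else 0) * V).rank = #I := by
  have hfactor : U * diagonal (fun k => if k ∈ I then (1 : K) else 0) * V =
      U.submatrix id ((↑) : I → κ) * V.submatrix ((↑) : I → κ) id := by
    ext x y
    rw [mul_apply, mul_apply]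
    simp only [mul_diagonal, submatrix_apply, id_eq, mul_ite, mul_one, mul_zero,
      ite_mul, zero_mul, Finset.sum_ite_mem, univ_inter]
    exact (Finset.sum_coe_sort I _).symm
  rw [hfactor,
    rank_mul_eq_right_of_linearIndependent_col (A := U.submatrix id ((↑) : I → κ)) hU,
    LinearIndependent.rank_matrix (M := V.submatrix ((↑) : I → κ) id) hV, Fintype.card_coe]

end Field

theorem sum_mul_mul_eq_mul_diagonal_mul {R : Type*} [Semiring R] {m n ι : Type*} [Fintype ι]
    [DecidableEq ι] {a b : ι → Type*} [∀ i, Fintype (a i)] [∀ i, Fintype (b i)]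
    [∀ i, DecidableEq (a i)] [∀ i, DecidableEq (b i)]
    (W : ∀ i, Matrix m (a i) R) (P : ∀ i, Matrix (a i) (b i) R) (V : ∀ i, Matrix (b i) n R) :
    ∑ i, W i * P i * V i =
      Matrix.of (fun x (k : Σ i, a i × b i) => W k.1 x k.2.1) *
        diagonal (fun k : Σ i, a i × b i => P k.1 k.2.1 k.2.2) *
        Matrix.of (fun (k : Σ i, a i × b i) y => V k.1 k.2.2 y) := by
  ext x y
  rw [Matrix.sum_apply, mul_apply]
  simp only [mul_diagonal, of_apply, Fintype.sum_sigma, Fintype.sum_prod_type]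
  refine Finset.sum_congr rfl fun i _ => ?_
  simp only [mul_apply, sum_mul]
  exact Finset.sum_comm

end Matrix

/-- the generic rank (maximum over the matrix parameters Pᵢ) of
∑ Wᵢ Pᵢ Rᵢ equals the maximum cardinality of a jointly independent subset I of
the set of triples (i, a, b), where (i, a, b) is associated with the a-th
column of Wᵢ and the b-th row of Rᵢ. -/
theorem generic_rank_matrices_eq_max_jointly_independent (d n₁ n₂ : ℕ)
    (α β : Fin d → ℕ)
    (W : ∀ i, Matrix (Fin n₁) (Fin (α i)) ℂ)
    (R : ∀ i, Matrix (Fin (β i)) (Fin n₂) ℂ) :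
    (⨆ P : ∀ i, Matrix (Fin (α i)) (Fin (β i)) ℂ,
        (∑ i, W i * P i * R i).rank) =
      ⨆ I : {I : Finset ((i : Fin d) × (Fin (α i) × Fin (β i))) //
        LinearIndependent ℂ (fun x : I => fun a : Fin n₁ => W x.1.1 a x.1.2.1) ∧
        LinearIndependent ℂ (fun x : I => fun b : Fin n₂ => R x.1.1 x.1.2.2 b)},
        (I : Finset ((i : Fin d) × (Fin (α i) × Fin (β i)))).card := by
  refine le_antisymm (ciSup_le fun P => ?_) (ciSup_le' fun I => ?_)
  · rw [sum_mul_mul_eq_mul_diagonal_mul]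
    obtain ⟨I, hW, hR, hrank⟩ := exists_linearIndepOn_rank_mul_diagonal_mul_le
      (of fun a (k : (i : Fin d) × (Fin (α i) × Fin (β i))) => W k.1 a k.2.1)
      (fun k => P k.1 k.2.1 k.2.2) (of fun k b => R k.1 k.2.2 b)
    exact le_ciSup_of_le (Set.finite_range _).bddAbove ⟨I, hW, hR⟩ hrank
  · refine le_ciSup_of_le ⟨n₁, Set.forall_mem_range.mpr fun P => rank_le_height _⟩
      (fun i => of fun a b => if ⟨i, a, b⟩ ∈ I.1 then 1 else 0) ?_
    rw [sum_mul_mul_eq_mul_diagonal_mul]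
    simp only [of_apply]
    rw [rank_mul_diagonal_indicator_mul]
    · exact I.2.1
    · exact I.2.2
end

section
/- Let d, n₁, n₂ be natural numbers. For each t ∈ {1, …, d}, let W_t be an n₁×α_t complex matrix and let R_t be a β_t×n₂ complex matrix. Consider the index set P of all triples (t, i, j) with t ∈ {1, …, d}, i ∈ {1, …, α_t}, j ∈ {1, …, β_t}, where to the triple (t, i, j) one associates the column vector w_{t,i,j} := (i-th column of W_t) and the row vector r_{t,i,j} := (j-th row of R_t). Then the minimum, over all subsets S ⊆ P, of (the dimension of the span of {w_x : x ∈ S}) plus (the dimension of the span of {r_y : y ∈ P \ S}) equals the minimum, over all subsets S ⊆ {1, …, d}, of (the rank of the horizontal concatenation of the matrices W_t for t ∈ S) plus (the rank of the vertical stacking of the matrices R_t for t ∉ S). -/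
/-- with each triple (t, i, j) associated with the i-th column of
W_t and the j-th row of R_t, the minimum over subsets S of the triple set of
dim span {w_x : x ∈ S} + dim span {r_y : y ∉ S} equals the minimum over
S ⊆ {1,…,d} of rank of the horizontal concatenation of the W_t, t ∈ S, plus
rank of the vertical stacking of the R_t, t ∉ S. -/
theorem min_over_triples_eq_min_over_indices (d n₁ n₂ : ℕ)
    (α β : Fin d → ℕ)
    (W : ∀ t, Matrix (Fin n₁) (Fin (α t)) ℂ)
    (R : ∀ t, Matrix (Fin (β t)) (Fin n₂) ℂ) :
    (⨅ S : Finset ((t : Fin d) × (Fin (α t) × Fin (β t))),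
        (Set.finrank ℂ
            ((fun x : (t : Fin d) × (Fin (α t) × Fin (β t)) =>
              fun a : Fin n₁ => W x.1 a x.2.1) '' ↑S) +
          Set.finrank ℂ
            ((fun x : (t : Fin d) × (Fin (α t) × Fin (β t)) =>
              fun b : Fin n₂ => R x.1 x.2.2 b) '' ↑(Sᶜ)))) =
      ⨅ S : Finset (Fin d),
        ((Matrix.of fun (a : Fin n₁) (c : (t : S) × Fin (α t.1)) =>
            W c.1 a c.2).rank +
          (Matrix.of fun (c : (t : ↥(Sᶜ)) × Fin (β t.1)) (b : Fin n₂) =>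
            R c.1 c.2 b).rank) := by
  classical
  have mono₁ : ∀ {s t : Set (Fin n₁ → ℂ)}, s ⊆ t →
      Set.finrank ℂ s ≤ Set.finrank ℂ t :=
    fun h => Submodule.finrank_mono (Submodule.span_mono h)
  have mono₂ : ∀ {s t : Set (Fin n₂ → ℂ)}, s ⊆ t →
      Set.finrank ℂ s ≤ Set.finrank ℂ t :=
    fun h => Submodule.finrank_mono (Submodule.span_mono h)
  apply le_antisymm
  · refine le_ciInf fun S => ?_
    set S' : Finset ((t : Fin d) × (Fin (α t) × Fin (β t))) :=
      Finset.univ.filter (fun x => x.1 ∈ S) with hS'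
    refine (ciInf_le (OrderBot.bddBelow _) S').trans ?_
    have h1 : Set.finrank ℂ
        ((fun x : (t : Fin d) × (Fin (α t) × Fin (β t)) =>
          fun a : Fin n₁ => W x.1 a x.2.1) '' ↑S') ≤
        (Matrix.of fun (a : Fin n₁) (c : (t : S) × Fin (α t.1)) =>
            W c.1 a c.2).rank := by
      rw [Matrix.rank_eq_finrank_span_cols]
      refine Submodule.finrank_mono (Submodule.span_mono ?_)
      rintro _ ⟨x, hx, rfl⟩
      simp only [hS', Finset.coe_filter, Set.mem_setOf_eq, Finset.mem_univ, true_and] at hx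
      exact ⟨⟨⟨x.1, hx⟩, x.2.1⟩, rfl⟩
    have h2 : Set.finrank ℂ
        ((fun x : (t : Fin d) × (Fin (α t) × Fin (β t)) =>
          fun b : Fin n₂ => R x.1 x.2.2 b) '' ↑(S'ᶜ)) ≤
        (Matrix.of fun (c : (t : ↥(Sᶜ)) × Fin (β t.1)) (b : Fin n₂) =>
            R c.1 c.2 b).rank := by
      rw [Matrix.rank_eq_finrank_span_row]
      refine Submodule.finrank_mono (Submodule.span_mono ?_)
      rintro _ ⟨x, hx, rfl⟩
      simp only [hS', Finset.coe_compl, Set.mem_compl_iff, Finset.mem_coe,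
        Finset.mem_filter, Finset.mem_univ, true_and] at hx
      exact ⟨⟨⟨x.1, Finset.mem_compl.mpr hx⟩, x.2.2⟩, rfl⟩
    exact Nat.add_le_add h1 h2
  · refine le_ciInf fun S' => ?_
    set S : Finset (Fin d) :=
      Finset.univ.filter (fun t => ∀ i : Fin (α t), ∃ j : Fin (β t),
        (⟨t, (i, j)⟩ : (t : Fin d) × (Fin (α t) × Fin (β t))) ∈ S') with hS
    refine (ciInf_le (OrderBot.bddBelow _) S).trans ?_
    have h1 : (Matrix.of fun (a : Fin n₁) (c : (t : S) × Fin (α t.1)) =>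
            W c.1 a c.2).rank ≤
        Set.finrank ℂ
          ((fun x : (t : Fin d) × (Fin (α t) × Fin (β t)) =>
            fun a : Fin n₁ => W x.1 a x.2.1) '' ↑S') := by
      rw [Matrix.rank_eq_finrank_span_cols]
      refine Submodule.finrank_mono (Submodule.span_mono ?_)
      rintro _ ⟨⟨⟨t, ht⟩, i⟩, rfl⟩
      simp only [hS, Finset.mem_filter, Finset.mem_univ, true_and] at ht
      obtain ⟨j, hj⟩ := ht i
      exact ⟨⟨t, (i, j)⟩, hj, rfl⟩
    have h2 : (Matrix.of fun (c : (t : ↥(Sᶜ)) × Fin (β t.1)) (b : Fin n₂) =>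
            R c.1 c.2 b).rank ≤
        Set.finrank ℂ
          ((fun x : (t : Fin d) × (Fin (α t) × Fin (β t)) =>
            fun b : Fin n₂ => R x.1 x.2.2 b) '' ↑(S'ᶜ)) := by
      rw [Matrix.rank_eq_finrank_span_row]
      refine Submodule.finrank_mono (Submodule.span_mono ?_)
      rintro _ ⟨⟨⟨t, ht⟩, j⟩, rfl⟩
      have ht' : t ∉ S := Finset.mem_compl.mp ht
      simp only [hS, Finset.mem_filter, Finset.mem_univ, true_and, not_forall] at ht'
      obtain ⟨i, hi⟩ := ht'
      refine ⟨⟨t, (i, j)⟩, ?_, rfl⟩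
      simp only [Finset.coe_compl, Set.mem_compl_iff, Finset.mem_coe]
      exact fun hmem => hi ⟨j, hmem⟩
    exact Nat.add_le_add h1 h2
end

section
/- Consider a k-channel linear system given by real matrices A ∈ ℝ^{n×n}, B_i ∈ ℝ^{n×m_i}, C_i ∈ ℝ^{l_i×n} for i ∈ {1, …, k}, and let λ ∈ ℂ. If there exists a subset S ⊆ {1, …, k} such that the block matrix [[λI_n − A, B_S],[C_{complement}, 0]] has rank < n over ℂ, then for every choice of real matrices F_i ∈ ℝ^{m_i×l_i}, rank(λI_n − A − ∑_{i=1}^k B_i F_i C_i) < n over ℂ; in particular λ is an eigenvalue of A + ∑_{i=1}^k B_i F_i C_i for every such choice, i.e., λ is in the fixed spectrum of the system. -/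
/-! Splitting the feedback sum over `S` and its complement gives
`λI - A - ∑ Bᵢ Fᵢ Cᵢ = (λI - A) - B_S H - G C_Sᶜ` with `H` the block column of the `Fᵢ Cᵢ`
(`i ∈ S`) and `G` the block row of the `Bⱼ Fⱼ` (`j ∉ S`). Since `M₁₁ - M₁₂ H - G M₂₁` equals
`[I, -G] · [[M₁₁, M₁₂], [M₂₁, 0]] · [I; -H]`, its rank is at most that of the block matrix.
-/

namespace Matrix

variable {R ι : Type*} {m n p q : Type*} {κ : ι → Type*}

def fromSigmaCols (B : ∀ i, Matrix m (κ i) R) : Matrix m (Σ i, κ i) R :=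
  of fun a c => B c.1 a c.2

def fromSigmaRows (D : ∀ i, Matrix (κ i) n R) : Matrix (Σ i, κ i) n R :=
  of fun c b => D c.1 c.2 b

theorem fromSigmaCols_mul_fromSigmaRows [NonUnitalNonAssocSemiring R] [Fintype ι]
    [∀ i, Fintype (κ i)] (B : ∀ i, Matrix m (κ i) R) (D : ∀ i, Matrix (κ i) n R) :
    fromSigmaCols B * fromSigmaRows D = ∑ i, B i * D i := by
  ext a b
  simp [mul_apply, sum_apply, Fintype.sum_sigma, fromSigmaCols, fromSigmaRows]

theorem sum_mul_mul_eq_fromSigmaCols_mul_fromSigmaRows_add [Semiring R] [Fintype ι]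
    [DecidableEq ι] {μ ν : ι → Type*} [∀ i, Fintype (μ i)] [∀ i, Fintype (ν i)]
    (B : ∀ i, Matrix m (μ i) R) (F : ∀ i, Matrix (μ i) (ν i) R) (C : ∀ i, Matrix (ν i) n R)
    (S : Finset ι) :
    ∑ i, B i * F i * C i =
      fromSigmaCols (fun i : S => B i) * fromSigmaRows (fun i : S => F i * C i) +
        fromSigmaCols (fun j : ↥Sᶜ => B j * F j) * fromSigmaRows (fun j : ↥Sᶜ => C j) := by
  rw [fromSigmaCols_mul_fromSigmaRows, fromSigmaCols_mul_fromSigmaRows,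
    Finset.sum_coe_sort S (fun i => B i * (F i * C i)),
    Finset.sum_coe_sort Sᶜ (fun i => B i * F i * C i)]
  simp only [Matrix.mul_assoc]
  exact (Finset.sum_add_sum_compl S _).symm

theorem rank_sub_mul_sub_mul_le_rank_fromBlocks [CommRing R] [StrongRankCondition R]
    [Fintype m] [Fintype n] [Fintype p] [Fintype q] [DecidableEq m] [DecidableEq n]
    (M₁₁ : Matrix m n R) (M₁₂ : Matrix m p R) (M₂₁ : Matrix q n R)
    (G : Matrix m q R) (H : Matrix p n R) :
    (M₁₁ - M₁₂ * H - G * M₂₁).rank ≤ (fromBlocks M₁₁ M₁₂ M₂₁ 0).rank := by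
  have : M₁₁ - M₁₂ * H - G * M₂₁ =
      Matrix.fromCols (1 : Matrix m m R) (-G) * fromBlocks M₁₁ M₁₂ M₂₁ 0 *
        Matrix.fromRows (1 : Matrix n n R) (-H) := by
    simp only [fromCols_mul_fromBlocks, fromCols_mul_fromRows, Matrix.one_mul, Matrix.mul_one,
      Matrix.mul_zero, add_zero, Matrix.mul_neg, Matrix.neg_mul]
    abel
  rw [this]
  exact (rank_mul_le_left _ _).trans (rank_mul_le_right _ _)

theorem det_eq_zero_of_rank_lt {K : Type*} [Field K] [Fintype n] [DecidableEq n]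
    {A : Matrix n n K} (h : A.rank < Fintype.card n) : A.det = 0 := by
  by_contra hdet
  exact h.ne (A.rank_of_isUnit ((isUnit_iff_isUnit_det A).mpr (isUnit_iff_ne_zero.mpr hdet)))

end Matrix

/-- sufficiency: if some S ⊆ {1,…,k} gives
rank [[λI − A, B_S],[C_{Sᶜ}, 0]] < n, then for every choice of feedback
matrices Fᵢ, rank (λI − A − ∑ Bᵢ Fᵢ Cᵢ) < n; in particular λ is an eigenvalue
of A + ∑ Bᵢ Fᵢ Cᵢ for every such choice. -/
theorem fixed_spectrum_sufficiency (n k : ℕ) (m l : Fin k → ℕ)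
    (A : Matrix (Fin n) (Fin n) ℝ)
    (B : ∀ i, Matrix (Fin n) (Fin (m i)) ℝ)
    (C : ∀ i, Matrix (Fin (l i)) (Fin n) ℝ)
    (lam : ℂ)
    (h : ∃ S : Finset (Fin k),
        (Matrix.fromBlocks
          (lam • (1 : Matrix (Fin n) (Fin n) ℂ) - A.map (fun x => (x : ℂ)))
          (Matrix.of fun (a : Fin n) (c : (i : S) × Fin (m i.1)) =>
            ((B c.1 a c.2 : ℝ) : ℂ))
          (Matrix.of fun (c : (j : ↥(Sᶜ)) × Fin (l j.1)) (b : Fin n) =>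
            ((C c.1 c.2 b : ℝ) : ℂ))
          0).rank < n) :
    ∀ F : ∀ i, Matrix (Fin (m i)) (Fin (l i)) ℝ,
      (lam • (1 : Matrix (Fin n) (Fin n) ℂ) -
          (A + ∑ i, B i * F i * C i).map (fun x => (x : ℂ))).rank < n ∧
        (lam • (1 : Matrix (Fin n) (Fin n) ℂ) -
          (A + ∑ i, B i * F i * C i).map (fun x => (x : ℂ))).det = 0 := by
  obtain ⟨S, hS⟩ := h
  intro F
  have hrank : (lam • (1 : Matrix (Fin n) (Fin n) ℂ) -
      (A + ∑ i, B i * F i * C i).map (fun x => (x : ℂ))).rank < n := by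
    refine lt_of_le_of_lt ?_ hS
    rw [Matrix.sum_mul_mul_eq_fromSigmaCols_mul_fromSigmaRows_add B F C S,
      show (fun x : ℝ => (x : ℂ)) = Complex.ofRealHom from rfl, Matrix.map_add _ (map_add _),
      Matrix.map_add _ (map_add _), Matrix.map_mul, Matrix.map_mul, ← sub_sub, ← sub_sub]
    -- The off-diagonal blocks of `hS` are `(fromSigmaCols _).map _`, `(fromSigmaRows _).map _`.
    exact Matrix.rank_sub_mul_sub_mul_le_rank_fromBlocks _ _ _ _ _
  exact ⟨hrank, Matrix.det_eq_zero_of_rank_lt (by simpa using hrank)⟩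
end

section
/- Consider a k-channel linear system given by real matrices A ∈ ℝ^{n×n}, B_i ∈ ℝ^{n×m_i}, C_i ∈ ℝ^{l_i×n} for i ∈ {1, …, k}, and let λ ∈ ℂ. If for every choice of real matrices F_i ∈ ℝ^{m_i×l_i} one has rank(λI_n − A − ∑_{i=1}^k B_i F_i C_i) < n over ℂ (i.e., λ is in the fixed spectrum of the system), then there exists a subset S ⊆ {1, …, k} such that the block matrix [[λI_n − A, B_S],[C_{complement}, 0]] has rank < n over ℂ. -/
/-!
Argue by contraposition: assume every block matrix `[[λI - A, B_S], [C_{Sᶜ}, 0]]` has rank at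
least `n`, and close the channels one at a time.

For one channel `(B, C)` acting on a matrix `N`: if `[N, B]` and `[N; C]` have rank at least `n`
but `N` has smaller rank, pick `g` with `B g ∉ range N` and `z ∈ ker N` with `C z ≠ 0`; a rank-one
feedback `G = g wᵀ` with `wᵀ C z = 1` then strictly raises the rank of `N + B G C`, while for
every `G` the matrices `[N + B G C, B]` and `[N + B G C; C]` have the same ranks as `[N, B]` and
`[N; C]`. Iterating reaches rank `n`.

To close channel `a`, apply this to the block matrix of every split `S` of the remaining channels,
with `a` bordering it once as an input and once as an output. For each `S` the good feedbacks
contain the nonvanishing locus of a nonzero polynomial (an `n × n` minor), so one real feedback is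
good for all `S` at once, and the block matrices of the remaining channels over
`A + B_a F_a C_a` still have rank at least `n`. When no channel is left the block matrix is the
closed-loop matrix itself.
-/

open Matrix Finset

namespace Matrix

variable {K : Type*} [Field K] {p q r s : Type*} [Fintype q]

theorem exists_linearIndependent_rows_of_le_rank [Fintype p] {n : ℕ} {M : Matrix p q K}
    (h : n ≤ M.rank) : ∃ f : Fin n → p, LinearIndependent K (M.submatrix f id).row := by
  obtain ⟨κ, a, ha, hspan, hli⟩ := exists_linearIndependent' K M.row
  have : Finite κ := Finite.of_injective a ha
  cases nonempty_fintype κ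
  rw [rank_eq_finrank_span_row, ← hspan, finrank_span_eq_card hli] at h
  obtain ⟨e⟩ : Nonempty (Fin n ↪ κ) := Function.Embedding.nonempty_of_card_le (by simpa)
  exact ⟨a ∘ e, hli.comp e e.injective⟩

theorem exists_submatrix_det_ne_zero_of_le_rank [Fintype p] {n : ℕ} {M : Matrix p q K}
    (h : n ≤ M.rank) : ∃ (f : Fin n → p) (g : Fin n → q), (M.submatrix f g).det ≠ 0 := by
  obtain ⟨f, hf⟩ := exists_linearIndependent_rows_of_le_rank h
  obtain ⟨g, hg⟩ := exists_linearIndependent_rows_of_le_rank (M := (M.submatrix f id)ᵀ)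
    (by rw [rank_transpose, hf.rank_matrix, Fintype.card_fin])
  refine ⟨f, g, ?_⟩
  rw [← det_transpose]
  exact ((isUnit_iff_isUnit_det _).1 (linearIndependent_rows_iff_isUnit.1 hg)).ne_zero

theorem le_rank_of_submatrix_det_ne_zero {n : ℕ} {M : Matrix p q K} {f : Fin n → p}
    {g : Fin n → q} (h : (M.submatrix f g).det ≠ 0) : n ≤ M.rank := by
  simpa [rank_of_det_ne_zero h] using rank_submatrix_le M f g

theorem exists_mulVec_notMem_range_of_rank_lt_rank_fromCols [Fintype r] {M : Matrix p q K}
    {B : Matrix p r K} (h : M.rank < (fromCols M B).rank) :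
    ∃ g, B *ᵥ g ∉ LinearMap.range M.mulVecLin := by
  by_contra! hB
  have : LinearMap.range (fromCols M B).mulVecLin ≤ LinearMap.range M.mulVecLin := by
    rintro _ ⟨v, rfl⟩
    obtain ⟨w, hw⟩ := hB (v ∘ Sum.inr)
    exact ⟨v ∘ Sum.inl + w, by simp_all [fromCols_mulVec, mulVec_add]⟩
  exact h.not_ge (Submodule.finrank_mono this)

theorem exists_mulVec_eq_zero_of_rank_lt_rank_fromRows {M : Matrix p q K}
    {C : Matrix s q K} (h : M.rank < (fromRows M C).rank) :
    ∃ z, M *ᵥ z = 0 ∧ C *ᵥ z ≠ 0 := by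
  by_contra! hC
  have hker : LinearMap.ker (fromRows M C).mulVecLin = LinearMap.ker M.mulVecLin := by
    ext z
    simp only [LinearMap.mem_ker, mulVecLin_apply, fromRows_mulVec]
    exact ⟨fun hz => by simpa using congrArg (· ∘ Sum.inl) hz,
      fun hz => by rw [hz, hC z hz]; exact Sum.elim_zero_zero⟩
  have h₁ := LinearMap.finrank_range_add_finrank_ker (fromRows M C).mulVecLin
  have h₂ := LinearMap.finrank_range_add_finrank_ker M.mulVecLin
  rw [hker] at h₁
  exact h.ne (by unfold rank; omega)

theorem rank_lt_rank_add_vecMulVec_s14 {M : Matrix p q K} {b : p → K} {c z : q → K}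
    (hb : b ∉ LinearMap.range M.mulVecLin) (hz : M *ᵥ z = 0) (hcz : c ⬝ᵥ z = 1) :
    M.rank < (M + vecMulVec b c).rank := by
  have hb' : b ∈ LinearMap.range (M + vecMulVec b c).mulVecLin :=
    ⟨z, by simp [hz, vecMulVec_mulVec, hcz]⟩
  have hM : LinearMap.range M.mulVecLin ≤ LinearMap.range (M + vecMulVec b c).mulVecLin := by
    rintro _ ⟨x, rfl⟩
    exact ⟨x - (c ⬝ᵥ x) • z, by simp [mulVec_sub, mulVec_smul, hz, vecMulVec_mulVec, hcz]⟩
  calc M.rank < Module.finrank K ↥(LinearMap.range M.mulVecLin ⊔ Submodule.span K {b}) :=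
        Submodule.finrank_lt_finrank_of_lt
          (left_lt_sup.2 (by rwa [Submodule.span_singleton_le_iff_mem]))
    _ ≤ (M + vecMulVec b c).rank :=
        Submodule.finrank_mono (sup_le hM ((Submodule.span_singleton_le_iff_mem _ _).2 hb'))

theorem exists_rank_lt_rank_add_mul_mul [Fintype r] [Fintype s] {M : Matrix p q K}
    {B : Matrix p r K} {C : Matrix s q K} (hB : M.rank < (fromCols M B).rank)
    (hC : M.rank < (fromRows M C).rank) : ∃ G : Matrix r s K, M.rank < (M + B * G * C).rank := by
  classical
  obtain ⟨g, hg⟩ := exists_mulVec_notMem_range_of_rank_lt_rank_fromCols hB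
  obtain ⟨z, hz, hCz⟩ := exists_mulVec_eq_zero_of_rank_lt_rank_fromRows hC
  obtain ⟨j, hj⟩ := Function.ne_iff.1 hCz
  refine ⟨vecMulVec g (Pi.single j ((C *ᵥ z) j)⁻¹), ?_⟩
  rw [mul_vecMulVec, vecMulVec_mul]
  refine rank_lt_rank_add_vecMulVec_s14 hg hz ?_
  rw [← dotProduct_mulVec, single_dotProduct, inv_mul_cancel₀ hj]

theorem rank_fromCols_add_mul_mul [Fintype r] [Fintype s] (M : Matrix p q K) (B : Matrix p r K)
    (G : Matrix r s K) (C : Matrix s q K) :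
    (fromCols (M + B * G * C) B).rank = (fromCols M B).rank := by
  classical
  have : fromCols (M + B * G * C) B =
      fromCols M B * (fromBlocks 1 0 (G * C) 1 : Matrix (q ⊕ r) (q ⊕ r) K) := by
    simp [fromCols_mul_fromBlocks, Matrix.mul_assoc]
  rw [this, rank_mul_eq_left_of_isUnit_det _ _ (by simp)]

variable [Fintype p] [Fintype r] [Fintype s]

theorem rank_fromRows_add_mul_mul (M : Matrix p q K) (B : Matrix p r K) (G : Matrix r s K)
    (C : Matrix s q K) : (fromRows (M + B * G * C) C).rank = (fromRows M C).rank := by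
  rw [← rank_transpose, transpose_fromRows, transpose_add, transpose_mul, transpose_mul,
    ← Matrix.mul_assoc, rank_fromCols_add_mul_mul, ← transpose_fromRows, rank_transpose]

theorem exists_le_rank_add_mul_mul {n : ℕ} {B : Matrix p r K} {C : Matrix s q K}
    (M : Matrix p q K) (hB : n ≤ (fromCols M B).rank) (hC : n ≤ (fromRows M C).rank) :
    ∃ G : Matrix r s K, n ≤ (M + B * G * C).rank := by
  induction h : n - M.rank using Nat.strong_induction_on generalizing M with
  | _ d ih =>
    by_cases hM : n ≤ M.rank
    · exact ⟨0, by simpa only [Matrix.mul_zero, Matrix.zero_mul, add_zero]⟩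
    obtain ⟨G, hG⟩ := exists_rank_lt_rank_add_mul_mul (M := M) (B := B) (C := C) (by omega)
      (by omega)
    obtain ⟨G', hG'⟩ := ih _ (by omega) (M + B * G * C) (by rwa [rank_fromCols_add_mul_mul])
      (by rwa [rank_fromRows_add_mul_mul]) rfl
    exact ⟨G + G', by rwa [Matrix.mul_add, Matrix.add_mul, ← add_assoc]⟩

theorem exists_ne_zero_forall_eval_ne_zero_le_rank_map {σ : Type*} {n : ℕ}
    (P : Matrix p q (MvPolynomial σ K)) (x₀ : σ → K)
    (h : n ≤ (P.map (MvPolynomial.eval x₀)).rank) :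
    ∃ D : MvPolynomial σ K, D ≠ 0 ∧
      ∀ x, MvPolynomial.eval x D ≠ 0 → n ≤ (P.map (MvPolynomial.eval x)).rank := by
  obtain ⟨f, g, hfg⟩ := exists_submatrix_det_ne_zero_of_le_rank h
  have hdet : ∀ x, MvPolynomial.eval x (P.submatrix f g).det =
      ((P.map (MvPolynomial.eval x)).submatrix f g).det := fun x => RingHom.map_det _ _
  exact ⟨(P.submatrix f g).det, fun h0 => hfg (by rw [← hdet, h0, map_zero]),
    fun x hx => le_rank_of_submatrix_det_ne_zero (by rwa [← hdet])⟩

theorem exists_ne_zero_forall_eval_ne_zero_le_rank_add_mul_mul {n : ℕ} (M : Matrix p q K)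
    (B : Matrix p r K) (C : Matrix s q K) (G₀ : Matrix r s K) (h : n ≤ (M + B * G₀ * C).rank) :
    ∃ D : MvPolynomial (r × s) K, D ≠ 0 ∧
      ∀ x, MvPolynomial.eval x D ≠ 0 → n ≤ (M + B * of (Function.curry x) * C).rank := by
  let c : K →+* MvPolynomial (r × s) K := MvPolynomial.C
  let X : Matrix r s (MvPolynomial (r × s) K) := of fun i j => MvPolynomial.X (i, j)
  let P := M.map c + B.map c * X * C.map c
  have hP : ∀ x, P.map (MvPolynomial.eval x) = M + B * of (Function.curry x) * C := by
    intro x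
    have hc : MvPolynomial.eval x ∘ c = id := funext MvPolynomial.eval_C
    have hX : X.map (MvPolynomial.eval x) = of (Function.curry x) := by ext; simp [X]
    rw [Matrix.map_add _ (map_add _), Matrix.map_mul, Matrix.map_mul, Matrix.map_map,
      Matrix.map_map, Matrix.map_map, hc, Matrix.map_id, Matrix.map_id, Matrix.map_id, hX]
  simp_rw [← hP]
  exact exists_ne_zero_forall_eval_ne_zero_le_rank_map P (Function.uncurry G₀) (by simpa [hP])

end Matrix

namespace MvPolynomial

variable {σ : Type*}

theorem eval_ofReal_map_ofRealHom (P : MvPolynomial σ ℝ) (x : σ → ℝ) :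
    eval (fun i => (x i : ℂ)) (map Complex.ofRealHom P) = eval x P :=
  (eval_map _ _ _).trans (eval₂_comp _ _ _).symm

theorem exists_eval_ofReal_ne_zero {P : MvPolynomial σ ℂ} (hP : P ≠ 0) :
    ∃ x : σ → ℝ, eval (fun i => (x i : ℂ)) P ≠ 0 := by
  set Pre : MvPolynomial σ ℝ := AddMonoidAlgebra.map Complex.reAddGroupHom P
  set Pim : MvPolynomial σ ℝ := AddMonoidAlgebra.map Complex.imAddGroupHom P
  have hP' : P = map Complex.ofRealHom Pre + C Complex.I * map Complex.ofRealHom Pim := by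
    ext d
    simp [Pre, Pim, coeff_map, coeff_addMonoidAlgebraMap, Complex.ext_iff]
  have heval : ∀ x : σ → ℝ,
      eval (fun i => (x i : ℂ)) P = eval x Pre + Complex.I * eval x Pim := by
    intro x
    conv_lhs => rw [hP']
    simp only [map_add, map_mul, eval_C, eval_ofReal_map_ofRealHom]
  by_contra! h
  have hre : Pre = 0 := MvPolynomial.funext fun x => by
    simpa using congrArg Complex.re ((heval x).symm.trans (h x))
  have him : Pim = 0 := MvPolynomial.funext fun x => by
    simpa [hre] using congrArg Complex.im ((heval x).symm.trans (h x))
  exact hP (by rw [hP', hre, him]; simp)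

theorem exists_eval_ofReal_forall_ne_zero {ι : Type*} (s : Finset ι) {P : ι → MvPolynomial σ ℂ}
    (hP : ∀ i ∈ s, P i ≠ 0) : ∃ x : σ → ℝ, ∀ i ∈ s, eval (fun j => (x j : ℂ)) (P i) ≠ 0 := by
  obtain ⟨x, hx⟩ := exists_eval_ofReal_ne_zero (prod_ne_zero_iff.2 hP)
  exact ⟨x, prod_ne_zero_iff.1 (by rwa [map_prod] at hx)⟩

end MvPolynomial

section ChannelBlockMatrix

variable {K : Type*} [Field K] {p q ι : Type*} {m l : ι → Type*}

/-- `[[A, B_S], [C_U, 0]]`, where `B_S` collects the inputs of the channels in `S` and `C_U` the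
outputs of the channels in `U`. -/
def channelBlockMatrix (A : Matrix p q K) (B : ∀ i, Matrix p (m i) K) (C : ∀ i, Matrix (l i) q K)
    (S U : Finset ι) : Matrix (p ⊕ (j : U) × l j) (q ⊕ (i : S) × m i) K :=
  fromBlocks A (of fun a c => B c.1 a c.2) (of fun c b => C c.1 c.2 b) 0

variable (A : Matrix p q K) (B : ∀ i, Matrix p (m i) K) (C : ∀ i, Matrix (l i) q K)
  (S U : Finset ι)

theorem channelBlockMatrix_transpose :
    (channelBlockMatrix A B C S U)ᵀ =
      channelBlockMatrix Aᵀ (fun i => (C i)ᵀ) (fun i => (B i)ᵀ) U S := by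
  rw [channelBlockMatrix, fromBlocks_transpose, transpose_zero]
  rfl

theorem rank_channelBlockMatrix_empty [Fintype q] [∀ i, Fintype (m i)] :
    (channelBlockMatrix A B C ∅ ∅).rank = A.rank := by
  rw [← rank_submatrix _ (Equiv.sumEmpty p _).symm (Equiv.sumEmpty q _).symm]
  rfl

theorem channelBlockMatrix_add_mul_mul (a : ι) [Fintype (m a)] [Fintype (l a)]
    (G : Matrix (m a) (l a) K) :
    channelBlockMatrix (A + B a * G * C a) B C S U =
      channelBlockMatrix A B C S U + fromRows (B a) 0 * G * fromCols (C a) 0 := by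
  have : fromRows (B a) 0 * G * fromCols (C a) 0 =
      (fromBlocks (B a * G * C a) 0 0 0 : Matrix (p ⊕ (j : U) × l j) (q ⊕ (i : S) × m i) K) := by
    rw [fromRows_mul, Matrix.zero_mul, fromRows_mul, Matrix.zero_mul, mul_fromCols,
      Matrix.mul_zero, ← fromCols_zero, ← fromRows_fromCols_eq_fromBlocks]
  rw [this, channelBlockMatrix, channelBlockMatrix, fromBlocks_add]
  simp

variable [DecidableEq ι] [Fintype p] [Fintype q] [∀ i, Fintype (m i)] [∀ i, Fintype (l i)]

theorem rank_channelBlockMatrix_insert_left_le (a : ι) :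
    (channelBlockMatrix A B C (insert a S) U).rank ≤
      (fromCols (channelBlockMatrix A B C S U) (fromRows (B a) 0)).rank := by
  rw [rank_eq_finrank_span_cols, rank_eq_finrank_span_cols]
  refine Submodule.finrank_mono (Submodule.span_le.2 (Set.range_subset_iff.2 ?_))
  rintro (b | ⟨⟨i, hi⟩, x⟩)
  · exact Submodule.subset_span ⟨Sum.inl (Sum.inl b), by funext r; cases r <;> rfl⟩
  · by_cases hia : i = a
    · subst hia
      exact Submodule.subset_span ⟨Sum.inr x, by funext r; cases r <;> rfl⟩
    · have hiS : i ∈ S := (mem_insert.1 hi).resolve_left hia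
      exact Submodule.subset_span ⟨Sum.inl (Sum.inr ⟨⟨i, hiS⟩, x⟩), by funext r; cases r <;> rfl⟩

theorem rank_channelBlockMatrix_insert_right_le (a : ι) :
    (channelBlockMatrix A B C S (insert a U)).rank ≤
      (fromRows (channelBlockMatrix A B C S U) (fromCols (C a) 0)).rank := by
  rw [← rank_transpose, ← rank_transpose (fromRows _ _), transpose_fromRows,
    channelBlockMatrix_transpose, channelBlockMatrix_transpose, transpose_fromCols, transpose_zero]
  exact rank_channelBlockMatrix_insert_left_le _ _ _ _ _ a

end ChannelBlockMatrix

section Feedback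

variable {p q ι : Type*} [Fintype p] [Fintype q] [DecidableEq ι]
  {m l : ι → Type*} [∀ i, Fintype (m i)] [∀ i, Fintype (l i)]

theorem exists_real_feedback_le_rank {n : ℕ} (T : Finset ι) (A : Matrix p q ℂ)
    (B : ∀ i, Matrix p (m i) ℂ) (C : ∀ i, Matrix (l i) q ℂ)
    (h : ∀ S ⊆ T, n ≤ (channelBlockMatrix A B C S (T \ S)).rank) :
    ∃ F : ∀ i, Matrix (m i) (l i) ℝ,
      n ≤ (A + ∑ i ∈ T, B i * (F i).map Complex.ofReal * C i).rank := by
  induction T using Finset.induction_on generalizing A with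
  | empty =>
    have h₀ := h ∅ subset_rfl
    rw [empty_sdiff, rank_channelBlockMatrix_empty] at h₀
    exact ⟨0, by simpa using h₀⟩
  | @insert a T ha ih =>
    have hgeneric : ∀ S ⊆ T, ∃ D : MvPolynomial (m a × l a) ℂ, D ≠ 0 ∧ ∀ x,
        MvPolynomial.eval x D ≠ 0 →
          n ≤ (channelBlockMatrix (A + B a * of (Function.curry x) * C a) B C S (T \ S)).rank := by
      intro S hS
      have haS : a ∉ S := fun h => ha (hS h)
      simp only [channelBlockMatrix_add_mul_mul]
      -- the splits `insert a S` and `S` of `insert a T` border the split `S` of `T` by channel `a`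
      obtain ⟨G, hG⟩ := exists_le_rank_add_mul_mul (channelBlockMatrix A B C S (T \ S))
        (B := fromRows (B a) 0) (C := fromCols (C a) 0)
        ((h _ (insert_subset_insert a hS)).trans_eq (by
          rw [insert_sdiff_insert, sdiff_insert_of_notMem ha])
          |>.trans (rank_channelBlockMatrix_insert_left_le A B C S _ a))
        ((h S (hS.trans (subset_insert a T))).trans_eq (by
          rw [insert_sdiff_of_notMem _ haS])
          |>.trans (rank_channelBlockMatrix_insert_right_le A B C S _ a))
      exact exists_ne_zero_forall_eval_ne_zero_le_rank_add_mul_mul _ _ _ G hG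
    choose! D hD0 hD using hgeneric
    obtain ⟨x, hx⟩ := MvPolynomial.exists_eval_ofReal_forall_ne_zero T.powerset
      (fun S hS => hD0 S (mem_powerset.1 hS))
    obtain ⟨F, hF⟩ := ih (A + B a * of (Function.curry fun j => (x j : ℂ)) * C a)
      (fun S hS => hD S hS _ (hx S (mem_powerset.2 hS)))
    refine ⟨Function.update F a (of (Function.curry x)), ?_⟩
    rw [sum_insert ha, Function.update_self, ← add_assoc]
    convert hF using 3
    · rfl
    · refine sum_congr rfl fun i hi => ?_
      rw [Function.update_of_ne (ne_of_mem_of_not_mem hi ha)]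

end Feedback

/-- necessity: if rank (λI − A − ∑ Bᵢ Fᵢ Cᵢ) < n for every
choice of feedback matrices Fᵢ, then there is S ⊆ {1,…,k} with
rank [[λI − A, B_S],[C_{Sᶜ}, 0]] < n. -/
theorem fixed_spectrum_necessity (n k : ℕ) (m l : Fin k → ℕ)
    (A : Matrix (Fin n) (Fin n) ℝ)
    (B : ∀ i, Matrix (Fin n) (Fin (m i)) ℝ)
    (C : ∀ i, Matrix (Fin (l i)) (Fin n) ℝ)
    (lam : ℂ)
    (h : ∀ F : ∀ i, Matrix (Fin (m i)) (Fin (l i)) ℝ,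
        (lam • (1 : Matrix (Fin n) (Fin n) ℂ) -
          (A + ∑ i, B i * F i * C i).map (fun x => (x : ℂ))).rank < n) :
    ∃ S : Finset (Fin k),
      (Matrix.fromBlocks
        (lam • (1 : Matrix (Fin n) (Fin n) ℂ) - A.map (fun x => (x : ℂ)))
        (Matrix.of fun (a : Fin n) (c : (i : S) × Fin (m i.1)) =>
          ((B c.1 a c.2 : ℝ) : ℂ))
        (Matrix.of fun (c : (j : ↥(Sᶜ)) × Fin (l j.1)) (b : Fin n) =>
          ((C c.1 c.2 b : ℝ) : ℂ))
        0).rank < n := by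
  by_contra! hfixed
  obtain ⟨F, hF⟩ := exists_real_feedback_le_rank (n := n) univ
    (lam • 1 - A.map Complex.ofReal) (fun i => (B i).map Complex.ofReal)
    (fun i => (C i).map Complex.ofReal)
    (fun S _ => by rw [← compl_eq_univ_sdiff]; exact hfixed S)
  refine (h (-F)).not_ge (hF.trans_eq (congrArg Matrix.rank ?_))
  change _ = lam • 1 - Complex.ofRealHom.mapMatrix (A + ∑ i, B i * -F i * C i)
  simp only [Matrix.mul_neg, Matrix.neg_mul, sum_neg_distrib, map_add, map_neg, map_sum,
    RingHom.mapMatrix_apply, Matrix.map_mul]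
  rw [sub_add, ← sub_eq_add_neg]
  rfl
end
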